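/- arXiv:2011.05365 — 6 statements merged into one kernel-verified Lean document; each statement's English description precedes it below -/
import Mathlib

section
/- Let L be an invertible lower-triangular d×d matrix and T a rooted tree on {1,...,d} such that for every column j, the set of row indices i with L_{ij} ≠ 0 is contained in the path from vertex j to the root of T. Then for any vector v, the set of nonzero coordinates of x = L⁻¹v is contained in the union, over all i with v_i ≠ 0, of the paths from i to the root of T. -/
/-- `Anc par i j` : `j` lies on the path from `i` to the root of the rooted tree on
`{1,…,d}` given by the parent map `par` (i.e. `j` is an ancestor of `i`, including
`i` itself). -/
def Anc {d : ℕ} (par : Fin d → Fin d) (i j : Fin d) : Prop :=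
  Relation.ReflTransGen (fun a b => par a = b) i j

/-- Let `L` be an invertible lower-triangular `d×d` matrix and `T` a rooted tree on
`{1,…,d}` (given by a parent map `par` with root `root`) such that the nonzero entries of
each column `j` of `L` occur only at ancestors of `j`.  Then every nonzero coordinate of
`x = L⁻¹ v` lies on the path from some `i` with `v i ≠ 0` to the root. -/
theorem triangular_solve_sparsity {d : ℕ} (L : Matrix (Fin d) (Fin d) ℝ)
    (par : Fin d → Fin d) (root : Fin d)
    (hroot : par root = root) (hconn : ∀ i, Anc par i root)
    (hinv : IsUnit L.det)
    (hlower : ∀ i j : Fin d, i < j → L i j = 0)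
    (hcol : ∀ i j : Fin d, L i j ≠ 0 → Anc par j i)
    (v : Fin d → ℝ) :
    ∀ k : Fin d, (L⁻¹.mulVec v) k ≠ 0 → ∃ i, v i ≠ 0 ∧ Anc par i k := by
  set x : Fin d → ℝ := L⁻¹.mulVec v with hx
  have hLx : L.mulVec x = v := by
    rw [hx, Matrix.mulVec_mulVec, Matrix.mul_nonsing_inv L hinv, Matrix.one_mulVec]
  have hdiag : ∀ i : Fin d, L i i ≠ 0 := by
    have hdet : L.det = ∏ i, L i i :=
      Matrix.det_of_lowerTriangular L (fun i j h => hlower i j h)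
    intro i hi
    rw [hdet] at hinv
    exact hinv.ne_zero (Finset.prod_eq_zero (Finset.mem_univ i) hi)
  suffices H : ∀ n : ℕ, ∀ k : Fin d, (k : ℕ) < n → x k ≠ 0 → ∃ i, v i ≠ 0 ∧ Anc par i k by
    intro k hk
    exact H (k + 1) k (Nat.lt_succ_self _) hk
  intro n
  induction n with
  | zero => intro k hk; exact absurd hk (Nat.not_lt_zero _)
  | succ n IH =>
    intro k hkn hk
    by_cases hv : v k ≠ 0
    · exact ⟨k, hv, Relation.ReflTransGen.refl⟩
    · push_neg at hv
      have hsum : ∑ j, L k j * x j = 0 := by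
        have := congrFun hLx k
        simpa [Matrix.mulVec, dotProduct, hv] using this
      have hterm : L k k * x k ≠ 0 := mul_ne_zero (hdiag k) hk
      -- there must be another nonzero term
      have : ∃ j, j ≠ k ∧ L k j * x j ≠ 0 := by
        by_contra h
        push_neg at h
        have : ∑ j, L k j * x j = L k k * x k := by
          apply Finset.sum_eq_single
          · intro j _ hj; exact h j hj
          · intro hki; exact absurd (Finset.mem_univ k) hki
        exact hterm (this ▸ hsum)
      obtain ⟨j, hjk, hj⟩ := this
      have hLkj : L k j ≠ 0 := fun h => hj (by simp [h])
      have hxj : x j ≠ 0 := fun h => hj (by simp [h])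
      have hjlt : j < k := by
        rcases lt_or_ge j k with h | h
        · exact h
        · exact absurd (hlower k j (lt_of_le_of_ne h (Ne.symm hjk))) hLkj
      obtain ⟨i, hvi, hij⟩ := IH j (by omega) hxj
      exact ⟨i, hvi, hij.trans (hcol k j hLkj)⟩
end

section
/- Let L be an invertible lower-triangular d×d matrix with elimination tree T of height τ (i.e., the nonzero pattern of each column L_j is contained in the path from j to the root of T). If the nonzero pattern of a vector v is a subset of a single path P from a leaf to the root in T, then the nonzero pattern of L⁻¹v is also a subset of P. -/
/-- Let `L` be an invertible lower-triangular `d×d` matrix whose elimination tree is the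
rooted tree given by the parent map `par` (i.e. the nonzero entries of each column `j` of
`L` occur only at ancestors of `j`).  If the nonzero pattern of `v` is contained in the
path `P` from a leaf `l` to the root, then the nonzero pattern of `L⁻¹ v` is also
contained in `P`. -/
theorem triangular_solve_path_sparsity {d : ℕ} (L : Matrix (Fin d) (Fin d) ℝ)
    (par : Fin d → Fin d) (root : Fin d)
    (hroot : par root = root) (hconn : ∀ i, Anc par i root)
    (hinv : IsUnit L.det)
    (hlower : ∀ i j : Fin d, i < j → L i j = 0)
    (hcol : ∀ i j : Fin d, L i j ≠ 0 → Anc par j i)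
    (l : Fin d) (hleaf : ∀ i, par i = l → i = l)
    (v : Fin d → ℝ) (hv : ∀ i, v i ≠ 0 → Anc par l i) :
    ∀ k : Fin d, (L⁻¹.mulVec v) k ≠ 0 → Anc par l k := by
  set x := L⁻¹.mulVec v with hx
  have hLx : L.mulVec x = v := by
    rw [hx, Matrix.mulVec_mulVec, Matrix.mul_nonsing_inv L hinv, Matrix.one_mulVec]
  have hdet : L.det = ∏ i, L i i := by
    apply Matrix.det_of_lowerTriangular
    intro i j h
    exact hlower i j h
  have hdiag : ∀ k : Fin d, L k k ≠ 0 := by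
    intro k hk
    have h0 := hinv.ne_zero
    rw [hdet] at h0
    exact h0 (Finset.prod_eq_zero (Finset.mem_univ k) hk)
  have key : ∀ n : ℕ, ∀ k : Fin d, (k : ℕ) < n → ¬ Anc par l k → x k = 0 := by
    intro n
    induction n using Nat.strong_induction_on with
    | _ n ih0 =>
      intro k hkn hk
      have ih : ∀ i : Fin d, i < k → ¬ Anc par l i → x i = 0 := fun i hi =>
        ih0 ((i : ℕ) + 1) (by omega) i (by omega)
      have hvk : v k = 0 := by
        by_contra h; exact hk (hv k h)
      have hsum : ∑ i, L k i * x i = v k := by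
        have := congrFun hLx k
        simpa [Matrix.mulVec, dotProduct] using this
      have hterm : ∀ i ∈ Finset.univ, i ≠ k → L k i * x i = 0 := by
        intro i _ hik
        rcases lt_or_gt_of_ne hik with h | h
        · by_cases hiS : Anc par l i
          · by_cases hL : L k i = 0
            · simp [hL]
            · exact absurd (hiS.trans (hcol k i hL)) hk
          · simp [ih i h hiS]
        · simp [hlower k i h]
      have hzero : L k k * x k = 0 := by
        rw [← Finset.sum_eq_single k hterm (by simp), hsum, hvk]
      rcases mul_eq_zero.mp hzero with h | h
      · exact absurd h (hdiag k)
      · exact h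
  intro k hxk
  by_contra hk
  exact hxk (key d k k.isLt hk)
end

section
/- Let T be a rooted tree of height h whose vertices are ordered a₁,...,aₙ by a depth-first traversal. For any contiguous interval [l,r] ⊆ [1,n], the intersection (⋃_{i∈[l,r]} P(a_i)) ∩ (⋃_{i∈[1,n]∖[l,r]} P(a_i)) has size at most 2h, where P(x) is the path from x to the root. -/
/-- `AncV par x y` : `y` lies on the path from `x` to the root of the rooted tree
given by the parent map `par` (i.e. `y` is an ancestor of `x`, including `x` itself). -/
def AncV {V : Type*} (par : V → V) (x y : V) : Prop :=
  Relation.ReflTransGen (fun a b => par a = b) x y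

/-- Let `T` be a rooted tree of height `h` (every root-to-vertex path has at most `h`
vertices), given by a parent map `par` with root `root`, whose vertices are ordered
`a 0, …, a (n-1)` by a depth-first traversal (subtrees are contiguous blocks of the
ordering).  For any contiguous interval `[l, r]` of indices, the intersection
`(⋃_{i ∈ [l,r]} P(a i)) ∩ (⋃_{i ∉ [l,r]} P(a i))` has size at most `2·h`, where
`P x` is the path from `x` to the root. -/
theorem dfs_interval_boundary_card {V : Type*} [Fintype V] {n : ℕ}
    (par : V → V) (root : V) (h : ℕ)
    (hroot : par root = root) (hconn : ∀ v, AncV par v root)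
    (hheight : ∀ v : V, {w | AncV par v w}.ncard ≤ h)
    (a : Fin n ≃ V)
    (hdfs : ∀ v : V, ∀ i j k : Fin n, i ≤ j → j ≤ k →
      AncV par (a i) v → AncV par (a k) v → AncV par (a j) v)
    (l r : Fin n) (hlr : l ≤ r) :
    ((⋃ i ∈ Set.Icc l r, {w | AncV par (a i) w}) ∩
      ⋃ i ∈ (Set.Icc l r)ᶜ, {w | AncV par (a i) w}).ncard ≤ 2 * h := by
  have hsub : ((⋃ i ∈ Set.Icc l r, {w | AncV par (a i) w}) ∩
      ⋃ i ∈ (Set.Icc l r)ᶜ, {w | AncV par (a i) w}) ⊆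
      {w | AncV par (a l) w} ∪ {w | AncV par (a r) w} := by
    rintro w ⟨hw1, hw2⟩
    simp only [Set.mem_iUnion, Set.mem_setOf_eq, Set.mem_Icc, Set.mem_compl_iff,
      not_and_or, not_le] at hw1 hw2
    obtain ⟨i, ⟨hli, hir⟩, hwi⟩ := hw1
    obtain ⟨j, hj, hwj⟩ := hw2
    rcases hj with hj | hj
    · exact Or.inl (hdfs w j l i hj.le hli hwj hwi)
    · exact Or.inr (hdfs w i r j hir hj.le hwi hwj)
  calc ((⋃ i ∈ Set.Icc l r, {w | AncV par (a i) w}) ∩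
      ⋃ i ∈ (Set.Icc l r)ᶜ, {w | AncV par (a i) w}).ncard
      ≤ ({w | AncV par (a l) w} ∪ {w | AncV par (a r) w}).ncard :=
        Set.ncard_le_ncard hsub (Set.toFinite _)
    _ ≤ {w | AncV par (a l) w}.ncard + {w | AncV par (a r) w}.ncard :=
        Set.ncard_union_le _ _
    _ ≤ h + h := Nat.add_le_add (hheight _) (hheight _)
    _ = 2 * h := (two_mul h).symm
end

section
/- Fix λ > 0 and weights w ∈ ℝ^m with w_i ≥ 1 for all i. Suppose r, r̄ ∈ ℝ^m satisfy |r_i − r̄_i| ≤ w_i/(8λ) for all i, and δ_r ∈ ℝ^m satisfies δ_{r,i} = −α·sinh(λ r̄_i / w_i)/√(Σ_j w_j⁻¹ cosh²(λ r̄_j / w_j)) + ε_{r,i} with √(Σ_i w_i⁻¹ ε_{r,i}²) ≤ α/8, for step size 0 ≤ α ≤ 1/(8λ). Then Ψ_λ(r + δ_r) ≤ Ψ_λ(r) − (αλ/2)·√(Σ_i w_i⁻¹ cosh²(λ r_i / w_i)) + αλ·√(Σ_i w_i⁻¹), where Ψ_λ(r) = Σ_{i=1}^m cosh(λ r_i /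 w_i). -/
open Finset


private lemma exp_quad {t : ℝ} (ht0 : 0 ≤ t) (ht : t ≤ 1/4) :
    Real.exp t ≤ 1 + t + (5/8) * t^2 := by
  have h1 : |t| ≤ 1 := by rw [abs_of_nonneg ht0]; linarith
  have h := Real.exp_bound h1 (n := 3) (by norm_num)
  have hs : ∑ m ∈ Finset.range 3, t ^ m / m.factorial = 1 + t + t^2/2 := by
    norm_num [Finset.sum_range_succ]
  rw [hs, abs_of_nonneg ht0] at h
  have h2 := (abs_sub_le_iff.1 h).1
  norm_num [Nat.factorial] at h2
  nlinarith [sq_nonneg t]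

private lemma abs_sinh_le_cosh (x : ℝ) : |Real.sinh x| ≤ Real.cosh x := by
  nlinarith [Real.sinh_sq x, Real.cosh_pos x, sq_abs (Real.sinh x), abs_nonneg (Real.sinh x)]

private lemma sinh_t_ge {t : ℝ} (ht : 0 ≤ t) : t ≤ Real.sinh t := by
  rcases eq_or_lt_of_le ht with h0 | h0
  · simp [← h0]
  · exact (Real.self_lt_sinh_iff.2 h0).le

private lemma abs_sinh_sub_self (h : ℝ) : |Real.sinh h - h| = Real.sinh |h| - |h| := by
  rcases le_or_gt 0 h with h0 | h0
  · rw [abs_of_nonneg h0, abs_of_nonneg (by linarith [sinh_t_ge h0])]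
  · have h1 : (0:ℝ) ≤ -h := by linarith
    have h2 := sinh_t_ge h1
    have h3 := Real.sinh_neg h
    rw [abs_of_nonpos h0.le, Real.sinh_neg]
    rw [abs_of_nonpos (by linarith : Real.sinh h - h ≤ 0)]
    ring

private lemma cosh_taylor {x h : ℝ} (hh : |h| ≤ 1/4) :
    Real.cosh (x + h) ≤ Real.cosh x + h * Real.sinh x + (5/8) * h^2 * Real.cosh x := by
  have ht0 : 0 ≤ |h| := abs_nonneg h
  have hst : |h| ≤ Real.sinh |h| := sinh_t_ge ht0
  have hexp := exp_quad ht0 hh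
  have hcs : Real.cosh |h| + Real.sinh |h| = Real.exp |h| := Real.cosh_add_sinh |h|
  have hch : Real.cosh h = Real.cosh |h| := (Real.cosh_abs h).symm
  have habs := abs_sinh_sub_self h
  have hsx := abs_sinh_le_cosh x
  have hcx := (Real.cosh_pos x).le
  have h1 : Real.sinh x * (Real.sinh h - h) ≤ Real.cosh x * (Real.sinh |h| - |h|) := by
    calc Real.sinh x * (Real.sinh h - h) ≤ |Real.sinh x * (Real.sinh h - h)| := le_abs_self _
    _ = |Real.sinh x| * |Real.sinh h - h| := abs_mul _ _
    _ ≤ Real.cosh x * (Real.sinh |h| - |h|) := by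
        rw [habs]; exact mul_le_mul_of_nonneg_right hsx (by linarith)
  have h2 : Real.cosh (x + h) = Real.cosh x * Real.cosh h + Real.sinh x * Real.sinh h :=
    Real.cosh_add x h
  have hsq : |h|^2 = h^2 := sq_abs h
  nlinarith [mul_le_mul_of_nonneg_left hexp hcx]

private lemma exp_small {t : ℝ} (ht0 : 0 ≤ t) (ht : t ≤ 1/8) : Real.exp t ≤ 8/7 := by
  have := exp_quad ht0 (by linarith)
  nlinarith

private lemma cosh_shift {x y : ℝ} (hy : |y| ≤ 1/8) :
    Real.cosh (x + y) ≤ 8/7 * Real.cosh x := by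
  have h2 := Real.cosh_add x y
  have hch : Real.cosh y = Real.cosh |y| := (Real.cosh_abs y).symm
  have hsh : Real.sinh x * Real.sinh y ≤ Real.cosh x * Real.sinh |y| := by
    calc Real.sinh x * Real.sinh y ≤ |Real.sinh x * Real.sinh y| := le_abs_self _
    _ = |Real.sinh x| * |Real.sinh y| := abs_mul _ _
    _ ≤ Real.cosh x * Real.sinh |y| := by
        rw [Real.abs_sinh y]
        exact mul_le_mul_of_nonneg_right (abs_sinh_le_cosh x) (by
          have h5 := sinh_t_ge (abs_nonneg y); have h6 := abs_nonneg y; linarith)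
  have hcs : Real.cosh |y| + Real.sinh |y| = Real.exp |y| := Real.cosh_add_sinh |y|
  have he := exp_small (abs_nonneg y) hy
  have hcx := (Real.cosh_pos x).le
  nlinarith [mul_le_mul_of_nonneg_left he hcx]

private lemma sinh_shift {x y : ℝ} (hy : |y| ≤ 1/8) :
    |Real.sinh (x + y) - Real.sinh x| ≤ 1/7 * Real.cosh x := by
  have h2 := Real.sinh_add x y
  have hexp := exp_quad (abs_nonneg y) (by linarith)
  have hcs : Real.cosh |y| + Real.sinh |y| = Real.exp |y| := Real.cosh_add_sinh |y|
  have hone : 1 ≤ Real.cosh y := Real.one_le_cosh y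
  have hch : Real.cosh y = Real.cosh |y| := (Real.cosh_abs y).symm
  have hsx := abs_sinh_le_cosh x
  have hcx := (Real.cosh_pos x).le
  have h3 : |Real.sinh (x+y) - Real.sinh x| ≤ |Real.sinh x| * (Real.cosh y - 1) + Real.cosh x * Real.sinh |y| := by
    rw [h2]
    calc |Real.sinh x * Real.cosh y + Real.cosh x * Real.sinh y - Real.sinh x|
        = |Real.sinh x * (Real.cosh y - 1) + Real.cosh x * Real.sinh y| := by ring_nf
      _ ≤ |Real.sinh x * (Real.cosh y - 1)| + |Real.cosh x * Real.sinh y| := abs_add_le _ _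
      _ ≤ |Real.sinh x| * (Real.cosh y - 1) + Real.cosh x * Real.sinh |y| := by
          have e1 : |Real.sinh x * (Real.cosh y - 1)| = |Real.sinh x| * (Real.cosh y - 1) := by
            rw [abs_mul, abs_of_nonneg (by linarith : (0:ℝ) ≤ Real.cosh y - 1)]
          have e2 : |Real.cosh x * Real.sinh y| = Real.cosh x * Real.sinh |y| := by
            rw [abs_mul, abs_of_nonneg hcx, Real.abs_sinh]
          rw [e1, e2]
  have hy2 : |y|^2 ≤ (1/8)*|y| := by nlinarith [abs_nonneg y]
  nlinarith [mul_le_mul_of_nonneg_right hsx (by linarith : (0:ℝ) ≤ Real.cosh y - 1),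
    mul_le_mul_of_nonneg_left hexp hcx, abs_nonneg y]

private lemma point_wcosh {u c : ℝ} (hu : 0 ≤ u) (hc : 1 ≤ c) : u ≤ u * c^2 := by
  have h : 1 ≤ c^2 := by nlinarith
  nlinarith [mul_le_mul_of_nonneg_left h hu]

private lemma point_cosh_sq {u a b : ℝ} (h1 : Real.cosh a ≤ 8/7 * Real.cosh b) (h4 : 0 ≤ u) :
    u * Real.cosh a^2 ≤ 64/49 * (u * Real.cosh b^2) := by
  have h2 := Real.cosh_pos a
  have h3 := Real.cosh_pos b
  have h5 : Real.cosh a^2 ≤ (8/7 * Real.cosh b)^2 := pow_le_pow_left₀ h2.le h1 2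
  nlinarith [mul_le_mul_of_nonneg_left h5 h4]

private lemma point_T1 {u cb sb s : ℝ} (h1 : |s - sb| ≤ 1/7 * cb) (h2 : |sb| ≤ cb)
    (h3 : cb^2 = sb^2 + 1) (h4 : 0 ≤ u) :
    6/7 * (u * cb^2) - u ≤ u * (sb * s) := by
  have h5 : -(sb * (s - sb)) ≤ cb * (1/7 * cb) := by
    calc -(sb*(s-sb)) ≤ |sb*(s-sb)| := neg_le_abs _
      _ = |sb| * |s - sb| := abs_mul _ _
      _ ≤ cb * (1/7*cb) := mul_le_mul h2 h1 (abs_nonneg _) (le_trans (abs_nonneg sb) h2)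
  have h6 : 6/7*cb^2 - 1 ≤ sb*s := by nlinarith
  nlinarith [mul_le_mul_of_nonneg_left h6 h4]

private lemma point_sinh_sq {u : ℝ} (x : ℝ) (hu : 0 ≤ u) :
    u * Real.sinh x^2 ≤ u * Real.cosh x^2 := by
  nlinarith [Real.sinh_sq x]

private lemma sq_split (a b : ℝ) : (a + b)^2 ≤ 9/8 * a^2 + 9 * b^2 := by
  nlinarith [sq_nonneg (a - 8*b)]

private lemma le_sq_of_one_le {a : ℝ} (h : 1 ≤ a) : a ≤ a^2 := by nlinarith

private lemma final_ineq {a l S C W T : ℝ} (ha : 0 ≤ a) (hl : 0 ≤ l)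
    (hp : a * l ≤ 1/8) (hC : 0 ≤ C) (hCS : C ≤ 8/7 * S) :
    T + a * l * (-(6/7) * S + W + C/8) + (5/8) * ((81/64) * a^2 * l^2 * C)
      ≤ T - a * l / 2 * C + a * l * W := by
  have hp0 : 0 ≤ a * l := mul_nonneg ha hl
  nlinarith [mul_le_mul_of_nonneg_left hCS hp0, mul_nonneg hp0 hC,
    mul_le_mul_of_nonneg_right (mul_le_mul_of_nonneg_right hp hp0) hC]

/-- Gradient-descent step on the soft-max potential `Ψ_λ(r) = Σᵢ cosh(λ rᵢ / wᵢ)`: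
given `r̄` entrywise close to `r` and a step `δ_r` that is the robust steepest-descent
direction computed at `r̄` up to an `ℓ₂(w⁻¹)` error of size `α/8`, with step size
`0 ≤ α ≤ 1/(8λ)`, the potential decreases as stated. -/
theorem softmax_potential_decrease (m : ℕ) (lam α : ℝ)
    (w r rbar δr εr : Fin m → ℝ)
    (hlam : 0 < lam)
    (hw : ∀ i, 1 ≤ w i)
    (hclose : ∀ i, |r i - rbar i| ≤ w i / (8 * lam))
    (hδ : ∀ i, δr i =
      -α * Real.sinh (lam * rbar i / w i) /
        Real.sqrt (∑ j, (w j)⁻¹ * Real.cosh (lam * rbar j / w j) ^ 2) + εr i)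
    (hε : Real.sqrt (∑ i, (w i)⁻¹ * εr i ^ 2) ≤ α / 8)
    (hα0 : 0 ≤ α) (hα : α ≤ 1 / (8 * lam)) :
    ∑ i, Real.cosh (lam * (r i + δr i) / w i) ≤
      ∑ i, Real.cosh (lam * r i / w i)
        - α * lam / 2 * Real.sqrt (∑ i, (w i)⁻¹ * Real.cosh (lam * r i / w i) ^ 2)
        + α * lam * Real.sqrt (∑ i, (w i)⁻¹) := by
  rcases Nat.eq_zero_or_pos m with hm | hm
  · subst hm; simp
  haveI : Nonempty (Fin m) := ⟨⟨0, hm⟩⟩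
  have hw0 : ∀ i, (0:ℝ) < w i := fun i => lt_of_lt_of_le one_pos (hw i)
  have hwne : ∀ i, w i ≠ 0 := fun i => (hw0 i).ne'
  have hwi1 : ∀ i, (w i)⁻¹ ≤ 1 := fun i => inv_le_one_of_one_le₀ (hw i)
  have hwi0 : ∀ i, (0:ℝ) < (w i)⁻¹ := fun i => inv_pos.2 (hw0 i)
  have hal : α * lam ≤ 1/8 := by
    have h := (le_div_iff₀ (by positivity : (0:ℝ) < 8 * lam)).1 hα
    nlinarith
  obtain ⟨S2, hS2def⟩ : ∃ x:ℝ, x = ∑ j, (w j)⁻¹ * Real.cosh (lam * rbar j / w j) ^ 2 := ⟨_, rfl⟩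
  obtain ⟨C2, hC2def⟩ : ∃ x:ℝ, x = ∑ i, (w i)⁻¹ * Real.cosh (lam * r i / w i) ^ 2 := ⟨_, rfl⟩
  obtain ⟨W2, hW2def⟩ : ∃ x:ℝ, x = ∑ i, (w i)⁻¹ := ⟨_, rfl⟩
  obtain ⟨E2, hE2def⟩ : ∃ x:ℝ, x = ∑ i, (w i)⁻¹ * εr i ^ 2 := ⟨_, rfl⟩
  rw [← hS2def] at hδ
  rw [← hE2def] at hε
  rw [← hC2def, ← hW2def]
  obtain ⟨S, hSdef⟩ : ∃ x:ℝ, x = Real.sqrt S2 := ⟨_, rfl⟩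
  obtain ⟨C, hCdef⟩ : ∃ x:ℝ, x = Real.sqrt C2 := ⟨_, rfl⟩
  obtain ⟨W, hWdef⟩ : ∃ x:ℝ, x = Real.sqrt W2 := ⟨_, rfl⟩
  obtain ⟨E, hEdef⟩ : ∃ x:ℝ, x = Real.sqrt E2 := ⟨_, rfl⟩
  rw [← hSdef] at hδ
  rw [← hEdef] at hε
  rw [← hCdef, ← hWdef]
  have hS2pos : 0 < S2 := hS2def ▸
    Finset.sum_pos (fun i _ => mul_pos (hwi0 i) (pow_pos (Real.cosh_pos _) 2))
      Finset.univ_nonempty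
  have hC2pos : 0 < C2 := hC2def ▸
    Finset.sum_pos (fun i _ => mul_pos (hwi0 i) (pow_pos (Real.cosh_pos _) 2))
      Finset.univ_nonempty
  have hE2nn : 0 ≤ E2 := hE2def ▸ Finset.sum_nonneg (fun i _ => mul_nonneg (hwi0 i).le (sq_nonneg _))
  have hSpos : 0 < S := by rw [hSdef]; exact Real.sqrt_pos.2 hS2pos
  have hCpos : 0 < C := by rw [hCdef]; exact Real.sqrt_pos.2 hC2pos
  have hSsq : S^2 = S2 := by rw [hSdef]; exact Real.sq_sqrt hS2pos.le
  have hCsq : C^2 = C2 := by rw [hCdef]; exact Real.sq_sqrt hC2pos.le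
  have hEsq : E^2 = E2 := by rw [hEdef]; exact Real.sq_sqrt hE2nn
  have hE0 : 0 ≤ E := by rw [hEdef]; exact Real.sqrt_nonneg _
  have hW0 : 0 ≤ W := by rw [hWdef]; exact Real.sqrt_nonneg _
  have hW2nn : 0 ≤ W2 := by rw [hW2def]; exact Finset.sum_nonneg (fun i _ => (hwi0 i).le)
  have hWsq : W^2 = W2 := by rw [hWdef]; exact Real.sq_sqrt hW2nn
  have hE2le : E2 ≤ α^2/64 := by
    have h := mul_le_mul hε hε hE0 (by positivity)
    calc E2 = E * E := by rw [← hEsq]; ring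
      _ ≤ α/8 * (α/8) := h
      _ = α^2/64 := by ring
  have hW2leS2 : W2 ≤ S2 := by
    rw [hW2def, hS2def]
    apply Finset.sum_le_sum
    intro i _
    exact point_wcosh (hwi0 i).le (Real.one_le_cosh _)
  have hWleS : W ≤ S := by rw [hWdef, hSdef]; exact Real.sqrt_le_sqrt hW2leS2
  -- closeness in the rescaled variables
  have hy : ∀ i, |lam * r i / w i - lam * rbar i / w i| ≤ 1/8 := by
    intro i
    have h1 : lam * r i / w i - lam * rbar i / w i = lam * (r i - rbar i) / w i := by
      ring
    rw [h1, abs_div, abs_mul, abs_of_pos hlam, abs_of_pos (hw0 i), div_le_iff₀ (hw0 i)]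
    have h3 := mul_le_mul_of_nonneg_left (hclose i) hlam.le
    have h4 : lam * (w i / (8 * lam)) = w i / 8 := by field_simp
    linarith
  have hcc : ∀ i, Real.cosh (lam * r i / w i) ≤ 8/7 * Real.cosh (lam * rbar i / w i) := by
    intro i
    have h1 : lam * r i / w i
        = lam * rbar i / w i + (lam * r i / w i - lam * rbar i / w i) := by ring
    rw [h1]; exact cosh_shift (hy i)
  have hccb : ∀ i, Real.cosh (lam * rbar i / w i) ≤ 8/7 * Real.cosh (lam * r i / w i) := by
    intro i
    have h1 : lam * rbar i / w i
        = lam * r i / w i + (lam * rbar i / w i - lam * r i / w i) := by ring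
    rw [h1]
    exact cosh_shift (by rw [abs_sub_comm]; exact hy i)
  have hss : ∀ i, |Real.sinh (lam * r i / w i) - Real.sinh (lam * rbar i / w i)|
      ≤ 1/7 * Real.cosh (lam * rbar i / w i) := by
    intro i
    have h1 : lam * r i / w i
        = lam * rbar i / w i + (lam * r i / w i - lam * rbar i / w i) := by ring
    rw [h1]; exact sinh_shift (hy i)
  have hC2le : C2 ≤ 64/49 * S2 := by
    rw [hC2def, hS2def, Finset.mul_sum]
    apply Finset.sum_le_sum
    intro i _
    exact point_cosh_sq (hcc i) (hwi0 i).le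
  have hCleS : C ≤ 8/7 * S := by
    have h1 : C ≤ Real.sqrt (64/49 * S2) := by
      rw [hCdef]; exact Real.sqrt_le_sqrt hC2le
    rwa [show (64:ℝ)/49 * S2 = (8/7*S)^2 by rw [mul_pow, hSsq]; norm_num,
      Real.sqrt_sq (mul_nonneg (by norm_num) hSpos.le)] at h1
  -- pointwise bounds
  have hcbS : ∀ i, Real.cosh (lam * rbar i / w i) ≤ Real.sqrt (w i) * S := by
    intro i
    have h1 : (w i)⁻¹ * Real.cosh (lam * rbar i / w i)^2 ≤ S2 := by
      rw [hS2def]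
      exact Finset.single_le_sum (f := fun j => (w j)⁻¹ * Real.cosh (lam * rbar j / w j)^2)
        (fun j _ => mul_nonneg (hwi0 j).le (sq_nonneg _)) (Finset.mem_univ i)
    have h2 : Real.cosh (lam * rbar i / w i)^2 ≤ w i * S2 := by
      have h3 := mul_le_mul_of_nonneg_left h1 (hw0 i).le
      rwa [← mul_assoc, mul_inv_cancel₀ (hwne i), one_mul] at h3
    calc Real.cosh (lam * rbar i / w i)
        = Real.sqrt (Real.cosh (lam * rbar i / w i)^2) :=
          (Real.sqrt_sq (Real.cosh_pos _).le).symm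
      _ ≤ Real.sqrt (w i * S2) := Real.sqrt_le_sqrt h2
      _ = Real.sqrt (w i) * S := by rw [Real.sqrt_mul (hw0 i).le, hSdef]
  have hεb : ∀ i, |εr i| ≤ Real.sqrt (w i) * E := by
    intro i
    have h1 : (w i)⁻¹ * εr i^2 ≤ E2 := by
      rw [hE2def]
      exact Finset.single_le_sum (f := fun j => (w j)⁻¹ * εr j^2)
        (fun j _ => mul_nonneg (hwi0 j).le (sq_nonneg _)) (Finset.mem_univ i)
    have h2 : εr i^2 ≤ w i * E2 := by
      have h3 := mul_le_mul_of_nonneg_left h1 (hw0 i).le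
      rwa [← mul_assoc, mul_inv_cancel₀ (hwne i), one_mul] at h3
    calc |εr i| = Real.sqrt (εr i^2) := (Real.sqrt_sq_eq_abs _).symm
      _ ≤ Real.sqrt (w i * E2) := Real.sqrt_le_sqrt h2
      _ = Real.sqrt (w i) * E := by rw [Real.sqrt_mul (hw0 i).le, hEdef]
  have hwC : ∀ i, (w i)⁻¹ * Real.cosh (lam * r i / w i) ≤ C := by
    intro i
    have h1 : (w i)⁻¹ * Real.cosh (lam * r i / w i)^2 ≤ C2 := by
      rw [hC2def]
      exact Finset.single_le_sum (f := fun j => (w j)⁻¹ * Real.cosh (lam * r j / w j)^2)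
        (fun j _ => mul_nonneg (hwi0 j).le (sq_nonneg _)) (Finset.mem_univ i)
    rw [hCdef, Real.le_sqrt (mul_nonneg (hwi0 i).le (Real.cosh_pos _).le) hC2pos.le]
    have h6 := mul_le_mul_of_nonneg_left h1 (hwi0 i).le
    have h7 : (w i)⁻¹ * C2 ≤ C2 := mul_le_of_le_one_left hC2pos.le (hwi1 i)
    calc ((w i)⁻¹ * Real.cosh (lam * r i / w i))^2
        = (w i)⁻¹ * ((w i)⁻¹ * Real.cosh (lam * r i / w i)^2) := by ring
      _ ≤ (w i)⁻¹ * C2 := h6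
      _ ≤ C2 := h7
  -- bound on |δr i|
  have hδabs : ∀ i, |δr i| ≤ 9/8 * α * Real.sqrt (w i) := by
    intro i
    have hsw : (1:ℝ) ≤ Real.sqrt (w i) := by
      rw [Real.le_sqrt zero_le_one (by linarith [hw i] : (0:ℝ) ≤ w i)]
      simpa using hw i
    rw [hδ i]
    have h1 : |(-α) * Real.sinh (lam * rbar i / w i) / S| ≤ α * Real.sqrt (w i) := by
      rw [abs_div, abs_mul, abs_neg, abs_of_nonneg hα0, abs_of_pos hSpos]
      rw [div_le_iff₀ hSpos]
      calc α * |Real.sinh (lam * rbar i / w i)|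
          ≤ α * (Real.sqrt (w i) * S) := by
            gcongr
            exact le_trans (abs_sinh_le_cosh _) (hcbS i)
        _ = α * Real.sqrt (w i) * S := by ring
    have h2 : |εr i| ≤ Real.sqrt (w i) * (α/8) := by
      calc |εr i| ≤ Real.sqrt (w i) * E := hεb i
        _ ≤ Real.sqrt (w i) * (α/8) := mul_le_mul_of_nonneg_left hε (Real.sqrt_nonneg _)
    calc |(-α) * Real.sinh (lam * rbar i / w i) / S + εr i|
        ≤ |(-α) * Real.sinh (lam * rbar i / w i) / S| + |εr i| := abs_add_le _ _
      _ ≤ α * Real.sqrt (w i) + Real.sqrt (w i) * (α/8) := add_le_add h1 h2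
      _ = 9/8 * α * Real.sqrt (w i) := by ring
  have hhle : ∀ i, |lam * δr i / w i| ≤ 1/4 := by
    intro i
    have hsw : Real.sqrt (w i) ≤ w i := by
      have h := Real.sqrt_le_sqrt (le_sq_of_one_le (hw i))
      rwa [Real.sqrt_sq (hw0 i).le] at h
    rw [abs_div, abs_mul, abs_of_pos hlam, abs_of_pos (hw0 i), div_le_iff₀ (hw0 i)]
    calc lam * |δr i| ≤ lam * (9/8 * α * Real.sqrt (w i)) := by
          gcongr
          exact hδabs i
      _ ≤ lam * (9/8 * α * w i) := by gcongr
      _ = (9/8 * (α * lam)) * w i := by ring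
      _ ≤ 1/4 * w i :=
          mul_le_mul_of_nonneg_right (by linarith : 9/8 * (α * lam) ≤ 1/4) (hw0 i).le
  -- Taylor expansion step
  have hxh : ∀ i, lam * (r i + δr i) / w i = lam * r i / w i + lam * δr i / w i := by
    intro i; ring
  have htaylor : ∑ i, Real.cosh (lam * (r i + δr i) / w i) ≤
      ∑ i, Real.cosh (lam * r i / w i)
      + ∑ i, (lam * δr i / w i) * Real.sinh (lam * r i / w i)
      + (5/8) * ∑ i, (lam * δr i / w i)^2 * Real.cosh (lam * r i / w i) := by
    rw [Finset.mul_sum, ← Finset.sum_add_distrib, ← Finset.sum_add_distrib]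
    apply Finset.sum_le_sum
    intro i _
    rw [hxh i]
    have := cosh_taylor (x := lam * r i / w i) (h := lam * δr i / w i) (hhle i)
    linarith
  -- first order: the inner-product sums
  have hT1 : (6/7) * S2 - W2
      ≤ ∑ i, (w i)⁻¹ * (Real.sinh (lam * rbar i / w i) * Real.sinh (lam * r i / w i)) := by
    have heq : (6/7) * S2 - W2
        = ∑ i, ((6/7) * ((w i)⁻¹ * Real.cosh (lam * rbar i / w i) ^ 2) - (w i)⁻¹) := by
      rw [Finset.sum_sub_distrib, ← Finset.mul_sum, hS2def, hW2def]
    rw [heq]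
    apply Finset.sum_le_sum
    intro i _
    have := point_T1 (hss i) (abs_sinh_le_cosh (lam * rbar i / w i))
      (Real.cosh_sq (lam * rbar i / w i)) (hwi0 i).le
    linarith
  have hT2 : ∑ i, (w i)⁻¹ * (εr i * Real.sinh (lam * r i / w i)) ≤ E * C := by
    set f : Fin m → ℝ := fun i => Real.sqrt ((w i)⁻¹) * εr i with hf
    set g : Fin m → ℝ := fun i => Real.sqrt ((w i)⁻¹) * Real.sinh (lam * r i / w i) with hg
    have hfg : ∀ i, (w i)⁻¹ * (εr i * Real.sinh (lam * r i / w i)) = f i * g i := by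
      intro i
      have h := Real.mul_self_sqrt (hwi0 i).le
      rw [hf, hg]
      simp only
      linear_combination (-(εr i * Real.sinh (lam * r i / w i))) * h
    have hcs := Finset.sum_mul_sq_le_sq_mul_sq Finset.univ f g
    have hf2 : ∑ i, f i ^ 2 = E2 := by
      rw [hE2def]
      apply Finset.sum_congr rfl
      intro i _
      rw [hf]; simp only
      rw [mul_pow, Real.sq_sqrt (hwi0 i).le]
    have hg2 : ∑ i, g i ^ 2 ≤ C2 := by
      rw [hC2def]
      apply Finset.sum_le_sum
      intro i _
      rw [hg]; simp only
      rw [mul_pow, Real.sq_sqrt (hwi0 i).le]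
      exact point_sinh_sq _ (hwi0 i).le
    have h1 : (∑ i, f i * g i)^2 ≤ E2 * C2 := by
      calc (∑ i, f i * g i)^2 ≤ (∑ i, f i^2) * (∑ i, g i^2) := hcs
        _ ≤ E2 * C2 := by rw [hf2]; exact mul_le_mul_of_nonneg_left hg2 hE2nn
    calc ∑ i, (w i)⁻¹ * (εr i * Real.sinh (lam * r i / w i))
        = ∑ i, f i * g i := Finset.sum_congr rfl (fun i _ => hfg i)
      _ ≤ |∑ i, f i * g i| := le_abs_self _
      _ = Real.sqrt ((∑ i, f i * g i)^2) := (Real.sqrt_sq_eq_abs _).symm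
      _ ≤ Real.sqrt (E2 * C2) := Real.sqrt_le_sqrt h1
      _ = E * C := by rw [Real.sqrt_mul hE2nn, hEdef, hCdef]
  -- first order bound
  have hfirst : ∑ i, (lam * δr i / w i) * Real.sinh (lam * r i / w i)
      ≤ α * lam * (-(6/7) * S + W + C/8) := by
    have hsplit : ∑ i, (lam * δr i / w i) * Real.sinh (lam * r i / w i)
        = lam * ((-(α/S)) * (∑ i, (w i)⁻¹
              * (Real.sinh (lam * rbar i / w i) * Real.sinh (lam * r i / w i)))
            + ∑ i, (w i)⁻¹ * (εr i * Real.sinh (lam * r i / w i))) := by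
      have hpt : ∀ i, (lam * δr i / w i) * Real.sinh (lam * r i / w i)
          = lam * ((-(α/S)) * ((w i)⁻¹
              * (Real.sinh (lam * rbar i / w i) * Real.sinh (lam * r i / w i)))
            + (w i)⁻¹ * (εr i * Real.sinh (lam * r i / w i))) := by
        intro i
        rw [hδ i]
        ring
      rw [Finset.sum_congr rfl (fun i _ => hpt i), ← Finset.mul_sum,
        Finset.sum_add_distrib, ← Finset.mul_sum]
    rw [hsplit]
    have h1 : (-(α/S)) * (∑ i, (w i)⁻¹
          * (Real.sinh (lam * rbar i / w i) * Real.sinh (lam * r i / w i)))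
        ≤ α * (-(6/7) * S + W) := by
      have h2 : (-(α/S)) * (∑ i, (w i)⁻¹
            * (Real.sinh (lam * rbar i / w i) * Real.sinh (lam * r i / w i)))
          ≤ (-(α/S)) * ((6/7) * S2 - W2) := by
        have hneg : -(α/S) ≤ 0 := by
          have h0 : 0 ≤ α/S := div_nonneg hα0 hSpos.le
          linarith
        exact mul_le_mul_of_nonpos_left hT1 hneg
      have h3 : (-(α/S)) * ((6/7) * S2 - W2) = α * (-(6/7) * S + W2/S) := by
        rw [← hSsq]; field_simp; ring
      have h4 : W2/S ≤ W := by
        rw [div_le_iff₀ hSpos]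
        calc W2 = W * W := by rw [← hWsq]; ring
          _ ≤ W * S := by gcongr
      calc (-(α/S)) * (∑ i, (w i)⁻¹
            * (Real.sinh (lam * rbar i / w i) * Real.sinh (lam * r i / w i)))
          ≤ α * (-(6/7) * S + W2/S) := by rw [← h3]; exact h2
        _ ≤ α * (-(6/7) * S + W) := by gcongr
    have h5 : ∑ i, (w i)⁻¹ * (εr i * Real.sinh (lam * r i / w i)) ≤ α/8 * C := by
      calc ∑ i, (w i)⁻¹ * (εr i * Real.sinh (lam * r i / w i)) ≤ E * C := hT2
        _ ≤ α/8 * C := mul_le_mul_of_nonneg_right hε hCpos.le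
    calc lam * ((-(α/S)) * (∑ i, (w i)⁻¹
            * (Real.sinh (lam * rbar i / w i) * Real.sinh (lam * r i / w i)))
          + ∑ i, (w i)⁻¹ * (εr i * Real.sinh (lam * r i / w i)))
        ≤ lam * (α * (-(6/7) * S + W) + α/8 * C) := by
          apply mul_le_mul_of_nonneg_left _ hlam.le
          exact add_le_add h1 h5
      _ = α * lam * (-(6/7) * S + W + C/8) := by ring
  -- second order bound
  have hδ2 : ∑ i, (w i)⁻¹ * δr i ^ 2 ≤ (81/64) * α^2 := by
    have hsb2 : ∑ i, (w i)⁻¹ * Real.sinh (lam * rbar i / w i)^2 ≤ S2 := by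
      rw [hS2def]
      apply Finset.sum_le_sum
      intro i _
      exact point_sinh_sq _ (hwi0 i).le
    have hpt : ∀ i ∈ Finset.univ, (w i)⁻¹ * δr i ^ 2
        ≤ (9/8) * (α^2/S2) * ((w i)⁻¹ * Real.sinh (lam * rbar i / w i)^2)
          + 9 * ((w i)⁻¹ * εr i^2) := by
      intro i _
      rw [hδ i]
      have hS2 : S^2 = S2 := hSsq
      have h5 : ((-α) * Real.sinh (lam * rbar i / w i) / S + εr i)^2
          ≤ (9/8) * (α^2/S2) * Real.sinh (lam * rbar i / w i)^2 + 9 * εr i^2 := by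
        have hkey : (9/8) * (α^2/S2) * Real.sinh (lam * rbar i / w i)^2
            = 9/8 * ((-α) * Real.sinh (lam * rbar i / w i) / S)^2 := by
          rw [← hS2]; ring
        rw [hkey]
        exact sq_split _ _
      linarith [mul_le_mul_of_nonneg_left h5 (hwi0 i).le]
    calc ∑ i, (w i)⁻¹ * δr i ^ 2
        ≤ ∑ i, ((9/8) * (α^2/S2) * ((w i)⁻¹ * Real.sinh (lam * rbar i / w i)^2)
            + 9 * ((w i)⁻¹ * εr i^2)) := Finset.sum_le_sum hpt
      _ = (9/8) * (α^2/S2) * (∑ i, (w i)⁻¹ * Real.sinh (lam * rbar i / w i)^2)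
            + 9 * E2 := by
          rw [Finset.sum_add_distrib, ← Finset.mul_sum, ← Finset.mul_sum, hE2def]
      _ ≤ (9/8) * (α^2/S2) * S2 + 9 * (α^2/64) :=
          add_le_add
            (mul_le_mul_of_nonneg_left hsb2
              (mul_nonneg (by norm_num) (div_nonneg (sq_nonneg α) hS2pos.le)))
            (mul_le_mul_of_nonneg_left hE2le (by norm_num))
      _ = (9/8) * α^2 + 9/64 * α^2 := by
          have h0 : S2 ≠ 0 := hS2pos.ne'
          field_simp
      _ = (81/64) * α^2 := by ring
  have hsecond : ∑ i, (lam * δr i / w i)^2 * Real.cosh (lam * r i / w i)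
      ≤ (81/64) * α^2 * lam^2 * C := by
    have hpt : ∀ i ∈ Finset.univ, (lam * δr i / w i)^2 * Real.cosh (lam * r i / w i)
        ≤ lam^2 * ((w i)⁻¹ * δr i^2) * C := by
      intro i _
      have h1 := hwC i
      have h2 : (lam * δr i / w i)^2 * Real.cosh (lam * r i / w i)
          = lam^2 * ((w i)⁻¹ * δr i^2) * ((w i)⁻¹ * Real.cosh (lam * r i / w i)) := by
        rw [inv_eq_one_div]; ring
      rw [h2]
      exact mul_le_mul_of_nonneg_left h1
        (mul_nonneg (sq_nonneg lam) (mul_nonneg (hwi0 i).le (sq_nonneg _)))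
    calc ∑ i, (lam * δr i / w i)^2 * Real.cosh (lam * r i / w i)
        ≤ ∑ i, lam^2 * ((w i)⁻¹ * δr i^2) * C := Finset.sum_le_sum hpt
      _ = lam^2 * C * ∑ i, (w i)⁻¹ * δr i^2 := by
          rw [Finset.mul_sum]
          exact Finset.sum_congr rfl (fun i _ => by ring)
      _ ≤ lam^2 * C * ((81/64) * α^2) := by
          apply mul_le_mul_of_nonneg_left hδ2 (mul_nonneg (sq_nonneg lam) hCpos.le)
      _ = (81/64) * α^2 * lam^2 * C := by ring
  -- assemble
  have hmid : ∑ i, Real.cosh (lam * (r i + δr i) / w i)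
      ≤ ∑ i, Real.cosh (lam * r i / w i)
        + α * lam * (-(6/7) * S + W + C/8) + (5/8) * ((81/64) * α^2 * lam^2 * C) := by
    have hs2 : (5/8) * ∑ i, (lam * δr i / w i)^2 * Real.cosh (lam * r i / w i)
        ≤ (5/8) * ((81/64) * α^2 * lam^2 * C) := by linarith
    linarith [htaylor, hfirst]
  have hp0 : 0 ≤ α * lam := mul_nonneg hα0 hlam.le
  calc ∑ i, Real.cosh (lam * (r i + δr i) / w i)
      ≤ ∑ i, Real.cosh (lam * r i / w i)
        + α * lam * (-(6/7) * S + W + C/8) + (5/8) * ((81/64) * α^2 * lam^2 * C) := hmid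
    _ ≤ ∑ i, Real.cosh (lam * r i / w i) - α * lam / 2 * C + α * lam * W :=
        final_ineq hα0 hlam.le hal hCpos.le hCleS
end

section
/- Let φ be a ν-self-concordant barrier for an interval (α, β) ⊆ ℝ. Then for any x ∈ (α, β), √(φ''(x)) ≤ 3ν / min(x − α, β − x). -/
open Set Filter


private lemma monoAux {g g' : ℝ → ℝ} {x y : ℝ}
    (hd : ∀ s ∈ Icc x y, HasDerivAt g (g' s) s)
    (h0 : ∀ s ∈ Icc x y, 0 ≤ g' s) : MonotoneOn g (Icc x y) := by
  apply monotoneOn_of_deriv_nonneg (convex_Icc x y)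
  · exact fun s hs => (hd s hs).continuousAt.continuousWithinAt
  · intro s hs
    rw [interior_Icc] at hs
    exact (hd s (Ioo_subset_Icc_self hs)).differentiableAt.differentiableWithinAt
  · intro s hs
    rw [interior_Icc] at hs
    rw [(hd s (Ioo_subset_Icc_self hs)).deriv]
    exact h0 s (Ioo_subset_Icc_self hs)

private lemma antiAux {g g' : ℝ → ℝ} {x y : ℝ}
    (hd : ∀ s ∈ Icc x y, HasDerivAt g (g' s) s)
    (h0 : ∀ s ∈ Icc x y, g' s ≤ 0) : AntitoneOn g (Icc x y) := by
  apply antitoneOn_of_deriv_nonpos (convex_Icc x y)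
  · exact fun s hs => (hd s hs).continuousAt.continuousWithinAt
  · intro s hs
    rw [interior_Icc] at hs
    exact (hd s (Ioo_subset_Icc_self hs)).differentiableAt.differentiableWithinAt
  · intro s hs
    rw [interior_Icc] at hs
    rw [(hd s (Ioo_subset_Icc_self hs)).deriv]
    exact h0 s (Ioo_subset_Icc_self hs)

set_option maxHeartbeats 1000000 in
private lemma coreBarrier (a b ν : ℝ) (f' f'' f''' : ℝ → ℝ)
    (hab : a < b) (hν : 1 ≤ ν)
    (hd2 : ∀ x ∈ Ioo a b, HasDerivAt f' (f'' x) x)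
    (hd3 : ∀ x ∈ Ioo a b, HasDerivAt f'' (f''' x) x)
    (hpos : ∀ x ∈ Ioo a b, 0 ≤ f'' x)
    (hsc : ∀ x ∈ Ioo a b, |f''' x| ≤ 2 * Real.sqrt (f'' x) ^ 3)
    (hbar : ∀ x ∈ Ioo a b, (f' x) ^ 2 ≤ ν * f'' x)
    (x : ℝ) (hx : x ∈ Ioo a b) (hfx : 0 ≤ f' x) :
    (b - x) * Real.sqrt (f'' x) ≤ 3 * ν := by
  obtain ⟨hax, hxb⟩ := hx
  rcases (hpos x ⟨hax, hxb⟩).eq_or_lt with h0 | hL2pos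
  · rw [← h0, Real.sqrt_zero, mul_zero]
    positivity
  by_contra hcon
  push_neg at hcon
  have hν0 : 0 < ν := by linarith
  obtain ⟨L, hLdef⟩ : ∃ L, L = Real.sqrt (f'' x) := ⟨_, rfl⟩
  rw [← hLdef] at hcon
  have hL : 0 < L := hLdef ▸ Real.sqrt_pos.mpr hL2pos
  have hLsq : L ^ 2 = f'' x := by rw [hLdef]; exact Real.sq_sqrt (le_of_lt hL2pos)
  obtain ⟨y, hxy, hyb, hr⟩ : ∃ y, x < y ∧ y < b ∧ 3 * ν < (y - x) * L := by
    refine ⟨(x + 3 * ν / L + b) / 2, ?_, ?_, ?_⟩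
    · have : 0 < 3 * ν / L := by positivity
      have : 3 * ν / L < b - x := by rw [div_lt_iff₀ hL]; linarith
      linarith [div_pos (by positivity : (0:ℝ) < 3 * ν) hL]
    · have : 3 * ν / L < b - x := by rw [div_lt_iff₀ hL]; linarith
      linarith
    · have h1 : 3 * ν / L < b - x := by rw [div_lt_iff₀ hL]; linarith
      have h2 : 3 * ν / L < (x + 3 * ν / L + b) / 2 - x := by linarith
      calc 3 * ν = 3 * ν / L * L := by field_simp
        _ < ((x + 3 * ν / L + b) / 2 - x) * L := mul_lt_mul_of_pos_right h2 hL
  have hd0 : 0 < y - x := by linarith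
  have hsub : Icc x y ⊆ Ioo a b := fun s hs =>
    ⟨lt_of_lt_of_le hax hs.1, lt_of_le_of_lt hs.2 hyb⟩
  -- Lipschitz sub-lemma
  have lip : ∀ c' ∈ Icc x y, (∀ s ∈ Icc x c', 0 < f'' s) →
      ∀ s ∈ Icc x c', (L⁻¹ + (s - x))⁻¹ ≤ Real.sqrt (f'' s) := by
    intro c' hc' hpos' s hs
    have hsub' : Icc x c' ⊆ Ioo a b := fun u hu => hsub ⟨hu.1, le_trans hu.2 hc'.2⟩
    have hder : ∀ u ∈ Icc x c', HasDerivWithinAt (fun u => (Real.sqrt (f'' u))⁻¹)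
        (-(1 / (2 * Real.sqrt (f'' u)) * f''' u) / Real.sqrt (f'' u) ^ 2) (Icc x c') u := by
      intro u hu
      have h1 : 0 < f'' u := hpos' u hu
      have h2 : Real.sqrt (f'' u) ≠ 0 := ne_of_gt (Real.sqrt_pos.mpr h1)
      exact (((Real.hasDerivAt_sqrt (ne_of_gt h1)).comp u (hd3 u (hsub' hu))).inv h2).hasDerivWithinAt
    have hbound : ∀ u ∈ Icc x c',
        ‖-(1 / (2 * Real.sqrt (f'' u)) * f''' u) / Real.sqrt (f'' u) ^ 2‖ ≤ 1 := by
      intro u hu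
      have h1 : 0 < f'' u := hpos' u hu
      have hs1 : 0 < Real.sqrt (f'' u) := Real.sqrt_pos.mpr h1
      have hsc' := hsc u (hsub' hu)
      rw [Real.norm_eq_abs, abs_div, abs_neg, abs_mul,
        abs_of_pos (by positivity : (0:ℝ) < 1 / (2 * Real.sqrt (f'' u))),
        abs_of_pos (by positivity : (0:ℝ) < Real.sqrt (f'' u) ^ 2),
        div_le_one (by positivity)]
      calc 1 / (2 * Real.sqrt (f'' u)) * |f''' u|
          ≤ 1 / (2 * Real.sqrt (f'' u)) * (2 * Real.sqrt (f'' u) ^ 3) := by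
            exact mul_le_mul_of_nonneg_left hsc' (by positivity)
        _ = Real.sqrt (f'' u) ^ 2 := by
            have e : Real.sqrt (f'' u) ^ 3 = Real.sqrt (f'' u) ^ 2 * Real.sqrt (f'' u) := by ring
            rw [e]; field_simp
    have hxmem : x ∈ Icc x c' := left_mem_Icc.mpr (le_trans hs.1 hs.2)
    have key := Convex.norm_image_sub_le_of_norm_hasDerivWithin_le hder hbound
      (convex_Icc x c') hxmem hs
    rw [Real.norm_eq_abs, Real.norm_eq_abs, one_mul] at key
    have habs : |s - x| = s - x := abs_of_nonneg (by linarith [hs.1])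
    have h1 : (Real.sqrt (f'' s))⁻¹ - L⁻¹ ≤ s - x := by
      calc (Real.sqrt (f'' s))⁻¹ - L⁻¹ ≤ |(Real.sqrt (f'' s))⁻¹ - (Real.sqrt (f'' x))⁻¹| := by
            rw [hLdef]; exact le_abs_self _
        _ ≤ |s - x| := key
        _ = s - x := habs
    have hVs_pos : 0 < Real.sqrt (f'' s) := Real.sqrt_pos.mpr (hpos' s hs)
    have h2 : (Real.sqrt (f'' s))⁻¹ ≤ L⁻¹ + (s - x) := by linarith
    calc (L⁻¹ + (s - x))⁻¹ ≤ ((Real.sqrt (f'' s))⁻¹)⁻¹ :=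
          inv_anti₀ (inv_pos.mpr hVs_pos) h2
      _ = Real.sqrt (f'' s) := inv_inv _
  -- positivity of f'' on [x,y]
  obtain ⟨M, hMdef⟩ : ∃ M, M = L⁻¹ + (y - x) + 1 := ⟨_, rfl⟩
  have hM0 : 0 < M := by rw [hMdef]; positivity
  have hML : M⁻¹ < L := by
    rw [inv_lt_comm₀ hM0 hL, hMdef]
    linarith [inv_pos.mpr hL]
  have claim : ∀ s ∈ Icc x y, 0 < f'' s := by
    by_contra hC
    push_neg at hC
    obtain ⟨s₁, hs₁, hs₁'⟩ := hC
    have hSclosed : IsClosed {s | s ∈ Icc x y ∧ f'' s ≤ M⁻¹ ^ 2} := by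
      have hcont : ContinuousOn f'' (Icc x y) := fun u hu =>
        ((hd3 u (hsub hu)).continuousAt).continuousWithinAt
      have h : IsClosed (Icc x y ∩ f'' ⁻¹' Iic (M⁻¹ ^ 2)) :=
        hcont.preimage_isClosed_of_isClosed isClosed_Icc isClosed_Iic
      convert h using 1
      rfl
    have hSne : Set.Nonempty {s | s ∈ Icc x y ∧ f'' s ≤ M⁻¹ ^ 2} :=
      ⟨s₁, hs₁, by nlinarith [sq_nonneg M⁻¹]⟩
    have hSbdd : BddBelow {s | s ∈ Icc x y ∧ f'' s ≤ M⁻¹ ^ 2} :=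
      ⟨x, fun u hu => hu.1.1⟩
    obtain ⟨c, hcdef⟩ : ∃ c, c = sInf {s | s ∈ Icc x y ∧ f'' s ≤ M⁻¹ ^ 2} := ⟨_, rfl⟩
    have hcS : c ∈ {s | s ∈ Icc x y ∧ f'' s ≤ M⁻¹ ^ 2} := by
      rw [hcdef]; exact hSclosed.csInf_mem hSne hSbdd
    have hcIcc : c ∈ Icc x y := hcS.1
    have hxc : x < c := by
      rcases hcIcc.1.lt_or_eq with h | h
      · exact h
      · exfalso
        have h5 : f'' c ≤ M⁻¹ ^ 2 := hcS.2
        rw [← h] at h5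
        nlinarith [hML, inv_pos.mpr hM0]
    have hIcoPos : ∀ s ∈ Ico x c, 0 < f'' s := by
      intro s hsI
      by_contra h
      push_neg at h
      have hmem : s ∈ {s | s ∈ Icc x y ∧ f'' s ≤ M⁻¹ ^ 2} :=
        ⟨⟨hsI.1, le_trans (le_of_lt hsI.2) hcIcc.2⟩, by nlinarith [sq_nonneg M⁻¹]⟩
      have := csInf_le hSbdd hmem
      rw [← hcdef] at this
      exact absurd this (not_le.mpr hsI.2)
    have hlow : ∀ s ∈ Ico x c, ((L⁻¹ + (y - x))⁻¹) ^ 2 ≤ f'' s := by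
      intro s hsI
      have hsy : s ∈ Icc x y := ⟨hsI.1, le_trans (le_of_lt hsI.2) hcIcc.2⟩
      have hp : ∀ u ∈ Icc x s, 0 < f'' u := fun u hu =>
        hIcoPos u ⟨hu.1, lt_of_le_of_lt hu.2 hsI.2⟩
      have h1 := lip s hsy hp s (right_mem_Icc.mpr hsI.1)
      have hA1 : 0 < L⁻¹ + (s - x) := by
        have := inv_pos.mpr hL; have := hsI.1; linarith
      have hA2 : L⁻¹ + (s - x) ≤ L⁻¹ + (y - x) := by
        have := hsy.2; linarith
      have h2 : (L⁻¹ + (y - x))⁻¹ ≤ (L⁻¹ + (s - x))⁻¹ := inv_anti₀ hA1 hA2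
      have h3 : (L⁻¹ + (y - x))⁻¹ ≤ Real.sqrt (f'' s) := le_trans h2 h1
      calc ((L⁻¹ + (y - x))⁻¹) ^ 2 ≤ Real.sqrt (f'' s) ^ 2 :=
            pow_le_pow_left₀ (by positivity) h3 2
        _ = f'' s := Real.sq_sqrt (le_of_lt (hp s (right_mem_Icc.mpr hsI.1)))
    have hmemcl : c ∈ closure (Ico x c) := by
      rw [closure_Ico (ne_of_lt hxc)]
      exact right_mem_Icc.mpr (le_of_lt hxc)
    haveI hne : (nhdsWithin c (Ico x c)).NeBot := mem_closure_iff_nhdsWithin_neBot.mp hmemcl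
    have htend : Tendsto f'' (nhdsWithin c (Ico x c)) (nhds (f'' c)) :=
      ((hd3 c (hsub hcIcc)).continuousAt).continuousWithinAt
    have h4 : ((L⁻¹ + (y - x))⁻¹) ^ 2 ≤ f'' c :=
      ge_of_tendsto htend (eventually_nhdsWithin_of_forall hlow)
    have h5 : f'' c ≤ M⁻¹ ^ 2 := hcS.2
    have h6 : M⁻¹ < (L⁻¹ + (y - x))⁻¹ := by
      apply inv_strictAnti₀ (by positivity)
      rw [hMdef]; linarith
    nlinarith [inv_pos.mpr hM0]
  -- lower bounds
  have hymem : y ∈ Icc x y := right_mem_Icc.mpr (le_of_lt hxy)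
  have hxmem : x ∈ Icc x y := left_mem_Icc.mpr (le_of_lt hxy)
  have hsqrt_low := lip y hymem claim
  have hApos : ∀ s ∈ Icc x y, 0 < L⁻¹ + (s - x) := by
    intro s hs
    have := inv_pos.mpr hL; have := hs.1; linarith
  have hf''_low : ∀ s ∈ Icc x y, ((L⁻¹ + (s - x))⁻¹) ^ 2 ≤ f'' s := by
    intro s hs
    have h1 := hsqrt_low s hs
    calc ((L⁻¹ + (s - x))⁻¹) ^ 2 ≤ Real.sqrt (f'' s) ^ 2 :=
          pow_le_pow_left₀ (le_of_lt (inv_pos.mpr (hApos s hs))) h1 2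
      _ = f'' s := Real.sq_sqrt (le_of_lt (claim s hs))
  -- Step B: monotone g
  have hgmono : MonotoneOn (fun s => f' s + (L⁻¹ + (s - x))⁻¹) (Icc x y) := by
    apply monoAux (g' := fun s => f'' s + -1 / (L⁻¹ + (s - x)) ^ 2)
    · intro s hs
      have hA := hApos s hs
      have h1 : HasDerivAt (fun u => L⁻¹ + (u - x)) 1 s := by
        simpa using ((hasDerivAt_id s).sub_const x).const_add L⁻¹
      have h2 := h1.inv (ne_of_gt hA)
      exact (hd2 s (hsub hs)).add h2
    · intro s hs
      have h1 := hf''_low s hs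
      have hA := hApos s hs
      have h2 : ((L⁻¹ + (s - x))⁻¹) ^ 2 = 1 / (L⁻¹ + (s - x)) ^ 2 := by
        rw [inv_pow, one_div]
      rw [h2] at h1
      have h3 : -1 / (L⁻¹ + (s - x)) ^ 2 = -(1 / (L⁻¹ + (s - x)) ^ 2) := by ring
      rw [h3]
      linarith
  have hf'_low : ∀ s ∈ Icc x y, L - (L⁻¹ + (s - x))⁻¹ ≤ f' s := by
    intro s hs
    have h1 := hgmono hxmem hs hs.1
    simp only at h1
    have e : L⁻¹ + (x - x) = L⁻¹ := by ring
    rw [e, inv_inv] at h1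
    linarith
  -- Step C
  obtain ⟨t, htdef⟩ : ∃ t, t = ((y - x) * L - ν) / (2 * ((y - x) * L)) := ⟨_, rfl⟩
  have hdL0 : 0 < (y - x) * L := by positivity
  have ht0 : 0 < t := by
    rw [htdef]; apply div_pos <;> linarith
  have ht1 : t < 1 := by
    rw [htdef, div_lt_one (by linarith)]; linarith
  obtain ⟨s₀, hs₀def⟩ : ∃ s₀, s₀ = x + t * (y - x) := ⟨_, rfl⟩
  have hxs₀ : x < s₀ := by rw [hs₀def]; nlinarith
  have hs₀y : s₀ < y := by rw [hs₀def]; nlinarith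
  have hs₀Icc : s₀ ∈ Icc x y := ⟨le_of_lt hxs₀, le_of_lt hs₀y⟩
  have hf'pos : ∀ s ∈ Icc s₀ y, 0 < f' s := by
    intro s hs
    have hsIcc : s ∈ Icc x y := ⟨le_trans (le_of_lt hxs₀) hs.1, hs.2⟩
    have h1 := hf'_low s hsIcc
    have hA := hApos s hsIcc
    have h2 : (L⁻¹ + (s - x))⁻¹ < L := by
      rw [inv_lt_comm₀ hA hL]
      have : x < s := lt_of_lt_of_le hxs₀ hs.1
      linarith
    linarith
  have hanti : AntitoneOn (fun s => (f' s)⁻¹ + s / ν) (Icc s₀ y) := by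
    apply antiAux (g' := fun s => -(f'' s) / (f' s) ^ 2 + 1 / ν)
    · intro s hs
      have hsIcc : s ∈ Icc x y := ⟨le_trans (le_of_lt hxs₀) hs.1, hs.2⟩
      have h1 := hf'pos s hs
      have h2 := (hd2 s (hsub hsIcc)).inv (ne_of_gt h1)
      have h3 : HasDerivAt (fun u : ℝ => u / ν) (1 / ν) s := by
        simpa using (hasDerivAt_id s).div_const ν
      exact h2.add h3
    · intro s hs
      have hsIcc : s ∈ Icc x y := ⟨le_trans (le_of_lt hxs₀) hs.1, hs.2⟩
      have h1 := hf'pos s hs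
      have h2 := hbar s (hsub hsIcc)
      have h3 : 1 / ν ≤ f'' s / (f' s) ^ 2 := by
        rw [div_le_div_iff₀ hν0 (by positivity)]
        linarith
      have h4 : -(f'' s) / (f' s) ^ 2 = -(f'' s / (f' s) ^ 2) := by ring
      rw [h4]; linarith
  have hs₀mem : s₀ ∈ Icc s₀ y := left_mem_Icc.mpr (le_of_lt hs₀y)
  have hymem' : y ∈ Icc s₀ y := right_mem_Icc.mpr (le_of_lt hs₀y)
  have hkey := hanti hs₀mem hymem' (le_of_lt hs₀y)
  simp only at hkey
  have hfy := hf'pos y hymem'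
  have hfs₀ := hf'pos s₀ hs₀mem
  have h6 : (y - s₀) / ν ≤ (f' s₀)⁻¹ := by
    have hinv : 0 < (f' y)⁻¹ := inv_pos.mpr hfy
    have e : (y - s₀) / ν = y / ν - s₀ / ν := by ring
    linarith
  have h7 : f' s₀ * (y - s₀) ≤ ν := by
    have h := mul_le_mul_of_nonneg_left h6 (le_of_lt hfs₀)
    rw [mul_inv_cancel₀ (ne_of_gt hfs₀)] at h
    have e : f' s₀ * ((y - s₀) / ν) = f' s₀ * (y - s₀) / ν := by ring
    rw [e, div_le_one hν0] at h
    linarith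
  have h8 : (L - (L⁻¹ + (s₀ - x))⁻¹) * (y - s₀) ≤ ν := by
    have h1 := hf'_low s₀ hs₀Icc
    have hys₀ : 0 ≤ y - s₀ := by linarith
    calc (L - (L⁻¹ + (s₀ - x))⁻¹) * (y - s₀) ≤ f' s₀ * (y - s₀) :=
          mul_le_mul_of_nonneg_right h1 hys₀
      _ ≤ ν := h7
  -- final algebra
  have e1 : s₀ - x = t * (y - x) := by rw [hs₀def]; ring
  have e2 : y - s₀ = (1 - t) * (y - x) := by rw [hs₀def]; ring
  rw [e1, e2] at h8
  have hden : 0 < 1 + t * (y - x) * L := by positivity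
  have e3 : L - (L⁻¹ + t * (y - x))⁻¹ = t * (y - x) * L ^ 2 / (1 + t * (y - x) * L) := by
    rw [eq_div_iff (ne_of_gt hden)]
    field_simp
    ring
  rw [e3, div_mul_eq_mul_div, div_le_iff₀ hden] at h8
  -- h8 : t * (y-x) * L^2 * ((1-t)*(y-x)) ≤ ν * (1 + t*(y-x)*L)
  obtain ⟨r, hrdef⟩ : ∃ r, r = (y - x) * L := ⟨_, rfl⟩
  have hr0 : 0 < r := hrdef ▸ hdL0
  have hrr : 3 * ν < r := hrdef ▸ hr
  have hpoly : t * (1 - t) * r ^ 2 ≤ ν * (1 + t * r) := by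
    rw [hrdef]; nlinarith [h8]
  rw [htdef, ← hrdef] at hpoly
  have hrne : r ≠ 0 := ne_of_gt hr0
  have e1 : (r - ν) / (2 * r) * (1 - (r - ν) / (2 * r)) * r ^ 2 = (r - ν) * (r + ν) / 4 := by
    field_simp; ring
  have e2 : ν * (1 + (r - ν) / (2 * r) * r) = ν * (2 + r - ν) / 2 := by
    field_simp; ring
  rw [e1, e2] at hpoly
  nlinarith [hpoly, hrr, hν, sq_nonneg (r - 3 * ν), mul_pos hν0 (sub_pos.2 hrr),
    mul_nonneg (le_of_lt hν0) (sub_nonneg.2 hν)]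

/-- Let `φ` be a `ν`-self-concordant barrier for the interval `(a, b)` (with derivatives
`φ'`, `φ''`, `φ'''`, self-concordance `|φ'''| ≤ 2 (φ'')^{3/2}`, barrier bound
`(φ')² ≤ ν φ''`, and `φ` blowing up at the boundary).  Then for every `x ∈ (a, b)`,
`√(φ''(x)) ≤ 3ν / min(x − a, b − x)`. -/
theorem barrier_sqrt_hess_le (a b ν : ℝ) (f f' f'' f''' : ℝ → ℝ)
    (hab : a < b) (hν : 1 ≤ ν)
    (hd1 : ∀ x ∈ Ioo a b, HasDerivAt f (f' x) x)
    (hd2 : ∀ x ∈ Ioo a b, HasDerivAt f' (f'' x) x)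
    (hd3 : ∀ x ∈ Ioo a b, HasDerivAt f'' (f''' x) x)
    (hpos : ∀ x ∈ Ioo a b, 0 ≤ f'' x)
    (hsc : ∀ x ∈ Ioo a b, |f''' x| ≤ 2 * Real.sqrt (f'' x) ^ 3)
    (hbar : ∀ x ∈ Ioo a b, (f' x) ^ 2 ≤ ν * f'' x)
    (hblowa : Tendsto f (nhdsWithin a (Ioo a b)) atTop)
    (hblowb : Tendsto f (nhdsWithin b (Ioo a b)) atTop) :
    ∀ x ∈ Ioo a b, Real.sqrt (f'' x) ≤ 3 * ν / min (x - a) (b - x) := by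
  intro x hx
  obtain ⟨hax, hxb⟩ := hx
  have hν0 : 0 < ν := by linarith
  have hmin : 0 < min (x - a) (b - x) := lt_min (by linarith) (by linarith)
  have hsq : 0 ≤ Real.sqrt (f'' x) := Real.sqrt_nonneg _
  rw [le_div_iff₀ hmin]
  rcases le_total 0 (f' x) with hsgn | hsgn
  · have hcore := coreBarrier a b ν f' f'' f''' hab hν hd2 hd3 hpos hsc hbar x ⟨hax, hxb⟩ hsgn
    calc Real.sqrt (f'' x) * min (x - a) (b - x)
        ≤ Real.sqrt (f'' x) * (b - x) := by
          exact mul_le_mul_of_nonneg_left (min_le_right _ _) hsq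
      _ = (b - x) * Real.sqrt (f'' x) := mul_comm _ _
      _ ≤ 3 * ν := hcore
  · -- reflect
    have hmem : ∀ s : ℝ, s ∈ Ioo a b → a + b - s ∈ Ioo a b := by
      intro s hs
      exact ⟨by linarith [hs.2], by linarith [hs.1]⟩
    have hneg : ∀ s : ℝ, HasDerivAt (fun u : ℝ => a + b - u) (-1) s := by
      intro s
      simpa using (hasDerivAt_id s).const_sub (a + b)
    have hd2' : ∀ s ∈ Ioo a b, HasDerivAt (fun u => -f' (a + b - u)) (f'' (a + b - s)) s := by
      intro s hs
      have h1 := (hd2 (a + b - s) (hmem s hs)).comp s (hneg s)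
      have h2 := h1.neg
      simpa [Function.comp_def, Pi.neg_def] using h2
    have hd3' : ∀ s ∈ Ioo a b, HasDerivAt (fun u => f'' (a + b - u)) (-f''' (a + b - s)) s := by
      intro s hs
      have h1 := (hd3 (a + b - s) (hmem s hs)).comp s (hneg s)
      simpa [Function.comp_def] using h1
    have hpos' : ∀ s ∈ Ioo a b, 0 ≤ f'' (a + b - s) := fun s hs => hpos _ (hmem s hs)
    have hsc' : ∀ s ∈ Ioo a b, |-f''' (a + b - s)| ≤ 2 * Real.sqrt (f'' (a + b - s)) ^ 3 := by
      intro s hs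
      rw [abs_neg]
      exact hsc _ (hmem s hs)
    have hbar' : ∀ s ∈ Ioo a b, (-f' (a + b - s)) ^ 2 ≤ ν * f'' (a + b - s) := by
      intro s hs
      rw [neg_pow]
      simpa using hbar _ (hmem s hs)
    have hx' : a + b - x ∈ Ioo a b := hmem x ⟨hax, hxb⟩
    have hsgn' : 0 ≤ -f' (a + b - (a + b - x)) := by
      have e : a + b - (a + b - x) = x := by ring
      rw [e]
      linarith
    have hcore := coreBarrier a b ν (fun u => -f' (a + b - u)) (fun u => f'' (a + b - u))
      (fun u => -f''' (a + b - u)) hab hν hd2' hd3' hpos' hsc' hbar' (a + b - x) hx' hsgn'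
    have e : a + b - (a + b - x) = x := by ring
    rw [e] at hcore
    -- hcore : (b - (a + b - x)) * Real.sqrt (f'' x) ≤ 3 * ν
    have e2 : b - (a + b - x) = x - a := by ring
    rw [e2] at hcore
    calc Real.sqrt (f'' x) * min (x - a) (b - x)
        ≤ Real.sqrt (f'' x) * (x - a) := by
          exact mul_le_mul_of_nonneg_left (min_le_left _ _) hsq
      _ = (x - a) * Real.sqrt (f'' x) := mul_comm _ _
      _ ≤ 3 * ν := hcore
end

section
/- Let φ be a ν-self-concordant barrier for the interval (0,1) with ν ≥ 1, and let x, z ∈ (0,1). Then φ'(x)(z − x) + (1/16)·√(φ''(x))·|z − x| ≤ 4ν² − (1/16)·max(z/x, (1−z)/(1−x)). -/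
open Set Filter

namespace BarrierAux

lemma neBot0 : (nhdsWithin (0:ℝ) (Ioo (0:ℝ) 1)).NeBot := by
  refine mem_closure_iff_nhdsWithin_neBot.mp ?_
  rw [closure_Ioo (by norm_num : (0:ℝ) ≠ 1)]
  exact ⟨le_refl 0, by norm_num⟩

lemma neBot1 : (nhdsWithin (1:ℝ) (Ioo (0:ℝ) 1)).NeBot := by
  refine mem_closure_iff_nhdsWithin_neBot.mp ?_
  rw [closure_Ioo (by norm_num : (0:ℝ) ≠ 1)]
  exact ⟨by norm_num, le_refl 1⟩

lemma mono_aux {F F' : ℝ → ℝ} {a b : ℝ} (hab : a ≤ b)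
    (hd : ∀ t ∈ Icc a b, HasDerivAt F (F' t) t)
    (h0 : ∀ t ∈ Ioo a b, 0 ≤ F' t) : F a ≤ F b := by
  have hmono : MonotoneOn F (Icc a b) := by
    apply monotoneOn_of_deriv_nonneg (convex_Icc a b)
    · exact fun t ht => (hd t ht).continuousAt.continuousWithinAt
    · intro t ht
      rw [interior_Icc] at ht
      exact (hd t (Ioo_subset_Icc_self ht)).differentiableAt.differentiableWithinAt
    · intro t ht
      rw [interior_Icc] at ht
      rw [(hd t (Ioo_subset_Icc_self ht)).deriv]
      exact h0 t ht
  exact hmono (left_mem_Icc.2 hab) (right_mem_Icc.2 hab) hab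

lemma anti_aux {F F' : ℝ → ℝ} {a b : ℝ} (hab : a ≤ b)
    (hd : ∀ t ∈ Icc a b, HasDerivAt F (F' t) t)
    (h0 : ∀ t ∈ Ioo a b, F' t ≤ 0) : F b ≤ F a := by
  have := mono_aux (F := fun t => -F t) (F' := fun t => -F' t) hab
    (fun t ht => (hd t ht).neg) (fun t ht => by simpa using h0 t ht)
  simpa using this

lemma lip_aux {F F' : ℝ → ℝ} {a b C : ℝ} (hab : a ≤ b)
    (hd : ∀ t ∈ Icc a b, HasDerivAt F (F' t) t)
    (hC : ∀ t ∈ Icc a b, |F' t| ≤ C) : |F b - F a| ≤ C * (b - a) := by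
  have := (convex_Icc a b).norm_image_sub_le_of_norm_hasDerivWithin_le
    (fun t ht => (hd t ht).hasDerivWithinAt)
    (fun t ht => by simpa [Real.norm_eq_abs] using hC t ht)
    (left_mem_Icc.2 hab) (right_mem_Icc.2 hab)
  simpa [Real.norm_eq_abs, abs_of_nonneg (sub_nonneg.2 hab)] using this

lemma mem_refl {x : ℝ} (hx : x ∈ Ioo (0:ℝ) 1) : 1 - x ∈ Ioo (0:ℝ) 1 :=
  ⟨by linarith [hx.2], by linarith [hx.1]⟩

structure SCB (ν : ℝ) (f f' f'' f''' : ℝ → ℝ) : Prop where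
  hν : 1 ≤ ν
  hd1 : ∀ x ∈ Ioo (0 : ℝ) 1, HasDerivAt f (f' x) x
  hd2 : ∀ x ∈ Ioo (0 : ℝ) 1, HasDerivAt f' (f'' x) x
  hd3 : ∀ x ∈ Ioo (0 : ℝ) 1, HasDerivAt f'' (f''' x) x
  hpos : ∀ x ∈ Ioo (0 : ℝ) 1, 0 ≤ f'' x
  hsc : ∀ x ∈ Ioo (0 : ℝ) 1, |f''' x| ≤ 2 * Real.sqrt (f'' x) ^ 3
  hbar : ∀ x ∈ Ioo (0 : ℝ) 1, (f' x) ^ 2 ≤ ν * f'' x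
  hblow0 : Tendsto f (nhdsWithin 0 (Ioo (0 : ℝ) 1)) atTop
  hblow1 : Tendsto f (nhdsWithin 1 (Ioo (0 : ℝ) 1)) atTop

variable {ν : ℝ} {f f' f'' f''' : ℝ → ℝ}

lemma mem_of_mem_Icc {a b t : ℝ} (ha : a ∈ Ioo (0:ℝ) 1) (hb : b ∈ Ioo (0:ℝ) 1)
    (ht : t ∈ Icc a b) : t ∈ Ioo (0:ℝ) 1 :=
  ⟨lt_of_lt_of_le ha.1 ht.1, lt_of_le_of_lt ht.2 hb.2⟩

lemma SCB.notBddAbove (h : SCB ν f f' f'' f''') {B : ℝ}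
    (hB : ∀ t ∈ Ioo (0:ℝ) 1, f t ≤ B) : False := by
  haveI : (nhdsWithin (0:ℝ) (Ioo (0:ℝ) 1)).NeBot := neBot0
  obtain ⟨t, ht1, ht2⟩ :=
    ((h.hblow0.eventually (eventually_ge_atTop (B + 1))).and eventually_mem_nhdsWithin).exists
  linarith [hB t ht2]

lemma SCB.f''_zero_all (h : SCB ν f f' f'' f''') {y : ℝ} (hy : y ∈ Ioo (0:ℝ) 1)
    (h0 : f'' y = 0) : ∀ t ∈ Ioo (0:ℝ) 1, f'' t = 0 := by
  intro t ht
  rcases le_total y t with hyt | hty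
  · obtain ⟨C, hC⟩ := (isCompact_Icc (a := y) (b := t)).exists_bound_of_continuousOn
      (fun s hs => ((h.hd3 s (mem_of_mem_Icc hy ht hs)).continuousAt.continuousWithinAt))
    set L := 2 * Real.sqrt C with hLdef
    have hL0 : 0 ≤ L := by positivity
    have hderiv : ∀ s ∈ Icc y t, HasDerivAt (fun s => f'' s * Real.exp (-L * s))
        (f''' s * Real.exp (-L * s) + f'' s * (Real.exp (-L * s) * -L)) s := by
      intro s hs
      have hlin : HasDerivAt (fun s : ℝ => -L * s) (-L) s := by
        simpa using (hasDerivAt_id s).const_mul (-L)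
      exact (h.hd3 s (mem_of_mem_Icc hy ht hs)).mul (hlin.exp.congr_deriv (by ring))
    have key := anti_aux hyt hderiv ?_
    · have h1 : f'' t * Real.exp (-L * t) ≤ 0 := by simpa [h0] using key
      have h2 := h.hpos t ht
      nlinarith [Real.exp_pos (-L * t)]
    · intro s hs
      have hsm := mem_of_mem_Icc hy ht (Ioo_subset_Icc_self hs)
      have hpos' := h.hpos s hsm
      have hsc' := h.hsc s hsm
      have hcube : Real.sqrt (f'' s) ^ 3 = f'' s * Real.sqrt (f'' s) := by
        rw [pow_succ, Real.sq_sqrt hpos']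
      have hsqle : Real.sqrt (f'' s) ≤ Real.sqrt C := by
        apply Real.sqrt_le_sqrt
        have := hC s (Ioo_subset_Icc_self hs)
        rw [Real.norm_eq_abs] at this
        exact (le_abs_self _).trans this
      have h3 : f''' s ≤ L * f'' s := by
        have h4 : f''' s ≤ 2 * (f'' s * Real.sqrt (f'' s)) := by
          rw [← hcube]; exact (le_abs_self _).trans hsc'
        have h5 : f'' s * Real.sqrt (f'' s) ≤ f'' s * Real.sqrt C :=
          mul_le_mul_of_nonneg_left hsqle hpos'
        rw [hLdef]; nlinarith
      have hexp := Real.exp_pos (-L * s)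
      nlinarith
  · obtain ⟨C, hC⟩ := (isCompact_Icc (a := t) (b := y)).exists_bound_of_continuousOn
      (fun s hs => ((h.hd3 s (mem_of_mem_Icc ht hy hs)).continuousAt.continuousWithinAt))
    set L := 2 * Real.sqrt C with hLdef
    have hL0 : 0 ≤ L := by positivity
    have hderiv : ∀ s ∈ Icc t y, HasDerivAt (fun s => f'' s * Real.exp (L * s))
        (f''' s * Real.exp (L * s) + f'' s * (Real.exp (L * s) * L)) s := by
      intro s hs
      have hlin : HasDerivAt (fun s : ℝ => L * s) L s := by
        simpa using (hasDerivAt_id s).const_mul L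
      exact (h.hd3 s (mem_of_mem_Icc ht hy hs)).mul (hlin.exp.congr_deriv (by ring))
    have key := mono_aux hty hderiv ?_
    · have h1 : f'' t * Real.exp (L * t) ≤ 0 := by
        have : f'' y * Real.exp (L * y) = 0 := by simp [h0]
        linarith [key, this.le, this.ge]
      have h2 := h.hpos t ht
      nlinarith [Real.exp_pos (L * t)]
    · intro s hs
      have hsm := mem_of_mem_Icc ht hy (Ioo_subset_Icc_self hs)
      have hpos' := h.hpos s hsm
      have hsc' := h.hsc s hsm
      have hcube : Real.sqrt (f'' s) ^ 3 = f'' s * Real.sqrt (f'' s) := by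
        rw [pow_succ, Real.sq_sqrt hpos']
      have hsqle : Real.sqrt (f'' s) ≤ Real.sqrt C := by
        apply Real.sqrt_le_sqrt
        have := hC s (Ioo_subset_Icc_self hs)
        rw [Real.norm_eq_abs] at this
        exact (le_abs_self _).trans this
      have h3 : -(L * f'' s) ≤ f''' s := by
        have h4 : -(2 * (f'' s * Real.sqrt (f'' s))) ≤ f''' s := by
          rw [← hcube]
          have := neg_abs_le (f''' s)
          linarith [hsc']
        have h5 : f'' s * Real.sqrt (f'' s) ≤ f'' s * Real.sqrt C :=
          mul_le_mul_of_nonneg_left hsqle hpos'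
        rw [hLdef]; nlinarith
      have hexp := Real.exp_pos (L * s)
      nlinarith

lemma SCB.f''_pos (h : SCB ν f f' f'' f''') : ∀ x ∈ Ioo (0:ℝ) 1, 0 < f'' x := by
  intro x hx
  rcases (h.hpos x hx).lt_or_eq with h' | h'
  · exact h'
  exfalso
  have hall := h.f''_zero_all hx h'.symm
  have hconst : ∀ t ∈ Ioo (0:ℝ) 1, f' t = f' x := by
    intro t ht
    have haux : ∀ a b : ℝ, a ∈ Ioo (0:ℝ) 1 → b ∈ Ioo (0:ℝ) 1 → a ≤ b → f' a = f' b := by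
      intro a b ha hb hab
      have hd : ∀ s ∈ Icc a b, HasDerivAt f' (f'' s) s :=
        fun s hs => h.hd2 s (mem_of_mem_Icc ha hb hs)
      have h1 := mono_aux hab hd (fun s hs => h.hpos s (mem_of_mem_Icc ha hb (Ioo_subset_Icc_self hs)))
      have h2 := anti_aux hab hd (fun s hs => (hall s (mem_of_mem_Icc ha hb (Ioo_subset_Icc_self hs))).le)
      linarith
    rcases le_total t x with htx | hxt
    · exact haux t x ht hx htx
    · exact (haux x t hx ht hxt).symm
  have haff : ∀ t ∈ Ioo (0:ℝ) 1, f t = f' x * t + (f x - f' x * x) := by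
    intro t ht
    have hd : ∀ s ∈ Ioo (0:ℝ) 1, HasDerivAt (fun s => f s - f' x * s) (f' s - f' x) s :=
      fun s hs => (h.hd1 s hs).sub (by simpa using (hasDerivAt_id s).const_mul (f' x))
    have haux : ∀ a b : ℝ, a ∈ Ioo (0:ℝ) 1 → b ∈ Ioo (0:ℝ) 1 → a ≤ b →
        f a - f' x * a = f b - f' x * b := by
      intro a b ha hb hab
      have hd' : ∀ s ∈ Icc a b, HasDerivAt (fun s => f s - f' x * s) (f' s - f' x) s :=
        fun s hs => hd s (mem_of_mem_Icc ha hb hs)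
      have h1 := mono_aux hab hd' (fun s hs => by
        rw [hconst s (mem_of_mem_Icc ha hb (Ioo_subset_Icc_self hs))]; simp)
      have h2 := anti_aux hab hd' (fun s hs => by
        rw [hconst s (mem_of_mem_Icc ha hb (Ioo_subset_Icc_self hs))]; simp)
      linarith
    rcases le_total t x with htx | hxt
    · have := haux t x ht hx htx; linarith
    · have := haux x t hx ht hxt; linarith
  apply h.notBddAbove (B := |f' x| + |f x - f' x * x|)
  intro t ht
  rw [haff t ht]
  have h1 : f' x * t ≤ |f' x| := by
    calc f' x * t ≤ |f' x * t| := le_abs_self _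
      _ = |f' x| * |t| := abs_mul _ _
      _ ≤ |f' x| * 1 := mul_le_mul_of_nonneg_left (abs_le.2 ⟨by linarith [ht.1], ht.2.le⟩) (abs_nonneg _)
      _ = |f' x| := mul_one _
  linarith [le_abs_self (f x - f' x * x)]

lemma refl_tendsto {a b : ℝ} (ha : a ∈ Icc (0:ℝ) 1) (hab : b = 1 - a) :
    Tendsto (fun t : ℝ => 1 - t) (nhdsWithin a (Ioo (0:ℝ) 1)) (nhdsWithin b (Ioo (0:ℝ) 1)) := by
  apply tendsto_nhdsWithin_of_tendsto_nhds_of_eventually_within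
  · have : Tendsto (fun t : ℝ => 1 - t) (nhds a) (nhds (1 - a)) := by
      simpa using (by fun_prop : Continuous (fun t : ℝ => 1 - t)).tendsto a
    rw [hab]
    exact this.mono_left nhdsWithin_le_nhds
  · filter_upwards [self_mem_nhdsWithin] with t ht
    exact mem_refl ht

lemma SCB.reflect (h : SCB ν f f' f'' f''') :
    SCB ν (fun t => f (1 - t)) (fun t => -f' (1 - t)) (fun t => f'' (1 - t))
      (fun t => -f''' (1 - t)) where
  hν := h.hν
  hd1 x hx := by
    have h2 : HasDerivAt (fun t : ℝ => 1 - t) (-1) x := (hasDerivAt_id x).const_sub 1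
    have := (h.hd1 (1 - x) (mem_refl hx)).comp x h2
    simpa [Function.comp_def] using this
  hd2 x hx := by
    have h2 : HasDerivAt (fun t : ℝ => 1 - t) (-1) x := (hasDerivAt_id x).const_sub 1
    have := ((h.hd2 (1 - x) (mem_refl hx)).comp x h2).neg
    simpa [Function.comp_def, Pi.neg_def] using this
  hd3 x hx := by
    have h2 : HasDerivAt (fun t : ℝ => 1 - t) (-1) x := (hasDerivAt_id x).const_sub 1
    have := (h.hd3 (1 - x) (mem_refl hx)).comp x h2
    simpa [Function.comp_def] using this
  hpos x hx := h.hpos _ (mem_refl hx)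
  hsc x hx := by simpa using h.hsc _ (mem_refl hx)
  hbar x hx := by simpa using h.hbar _ (mem_refl hx)
  hblow0 := h.hblow1.comp (refl_tendsto ⟨le_refl 0, by norm_num⟩ (by norm_num))
  hblow1 := h.hblow0.comp (refl_tendsto ⟨by norm_num, le_refl 1⟩ (by norm_num))


lemma SCB.lip (h : SCB ν f f' f'' f''') {a b : ℝ} (ha : a ∈ Ioo (0:ℝ) 1)
    (hb : b ∈ Ioo (0:ℝ) 1) (hab : a ≤ b) :
    |(Real.sqrt (f'' b))⁻¹ - (Real.sqrt (f'' a))⁻¹| ≤ b - a := by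
  have hder : ∀ t ∈ Icc a b, HasDerivAt (fun s => (Real.sqrt (f'' s))⁻¹)
      (-(1 / (2 * Real.sqrt (f'' t)) * f''' t) / Real.sqrt (f'' t) ^ 2) t := by
    intro t ht
    have htm := mem_of_mem_Icc ha hb ht
    have h2 : (0:ℝ) < f'' t := h.f''_pos t htm
    have hsq : HasDerivAt (fun s => Real.sqrt (f'' s)) (1 / (2 * Real.sqrt (f'' t)) * f''' t) t :=
      (Real.hasDerivAt_sqrt (ne_of_gt h2)).comp t (h.hd3 t htm)
    exact hsq.inv (by positivity)
  have hbound : ∀ t ∈ Icc a b,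
      |(-(1 / (2 * Real.sqrt (f'' t)) * f''' t) / Real.sqrt (f'' t) ^ 2)| ≤ 1 := by
    intro t ht
    have htm := mem_of_mem_Icc ha hb ht
    have h2 : (0:ℝ) < f'' t := h.f''_pos t htm
    have hs : (0:ℝ) < Real.sqrt (f'' t) := Real.sqrt_pos.2 h2
    have hval : (-(1 / (2 * Real.sqrt (f'' t)) * f''' t) / Real.sqrt (f'' t) ^ 2)
        = -f''' t / (2 * Real.sqrt (f'' t) ^ 3) := by
      field_simp
    rw [hval, abs_div, abs_neg, abs_of_pos (by positivity : (0:ℝ) < 2 * Real.sqrt (f'' t) ^ 3),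
      div_le_one (by positivity)]
    simpa using h.hsc t htm
  have := lip_aux hab hder hbound
  simpa using this

lemma SCB.dikinR (h : SCB ν f f' f'' f''') {x : ℝ} (hx : x ∈ Ioo (0:ℝ) 1) :
    1 ≤ Real.sqrt (f'' x) * (1 - x) := by
  by_contra hcon
  push_neg at hcon
  have hc : (0:ℝ) < Real.sqrt (f'' x) := Real.sqrt_pos.2 (h.f''_pos x hx)
  set c := Real.sqrt (f'' x) with hcdef
  set δ := c⁻¹ - (1 - x) with hδdef
  have hδ : 0 < δ := by
    have h1x : (0:ℝ) < 1 - x := by linarith [hx.2]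
    have h2 : 1 - x < 1 / c := (lt_div_iff₀ hc).2 (by nlinarith [hcon])
    rw [hδdef]
    rw [← one_div]
    linarith
  have hf''le : ∀ t, x ≤ t → t < 1 → f'' t ≤ δ⁻¹ ^ 2 := by
    intro t h1 h2
    have htm : t ∈ Ioo (0:ℝ) 1 := ⟨lt_of_lt_of_le hx.1 h1, h2⟩
    have hlip := h.lip hx htm h1
    have h3 : δ ≤ (Real.sqrt (f'' t))⁻¹ := by
      have := (abs_le.1 hlip).1
      rw [hδdef]
      linarith
    have hst : (0:ℝ) < Real.sqrt (f'' t) := Real.sqrt_pos.2 (h.f''_pos t htm)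
    have h4 : Real.sqrt (f'' t) ≤ δ⁻¹ := by
      rw [← inv_inv (Real.sqrt (f'' t))]
      exact inv_anti₀ hδ h3
    calc f'' t = Real.sqrt (f'' t) ^ 2 := (Real.sq_sqrt (h.hpos t htm)).symm
      _ ≤ δ⁻¹ ^ 2 := by nlinarith [hst]
  have hf'le : ∀ t, x ≤ t → t < 1 → |f' t - f' x| ≤ δ⁻¹ ^ 2 := by
    intro t h1 h2
    have step : |f' t - f' x| ≤ δ⁻¹ ^ 2 * (t - x) :=
      lip_aux h1 (fun s hs => h.hd2 s ⟨lt_of_lt_of_le hx.1 hs.1, lt_of_le_of_lt hs.2 h2⟩)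
        (fun s hs => by
          rw [abs_of_nonneg (h.hpos s ⟨lt_of_lt_of_le hx.1 hs.1, lt_of_le_of_lt hs.2 h2⟩)]
          exact hf''le s hs.1 (lt_of_le_of_lt hs.2 h2))
    have : δ⁻¹ ^ 2 * (t - x) ≤ δ⁻¹ ^ 2 * 1 :=
      mul_le_mul_of_nonneg_left (by linarith [hx.1]) (by positivity)
    linarith
  have hfle : ∀ t, x ≤ t → t < 1 → f t ≤ f x + (|f' x| + δ⁻¹ ^ 2) := by
    intro t h1 h2
    have step : |f t - f x| ≤ (|f' x| + δ⁻¹ ^ 2) * (t - x) :=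
      lip_aux h1 (fun s hs => h.hd1 s ⟨lt_of_lt_of_le hx.1 hs.1, lt_of_le_of_lt hs.2 h2⟩)
        (fun s hs => by
          have hstep := hf'le s hs.1 (lt_of_le_of_lt hs.2 h2)
          have habs := abs_sub_abs_le_abs_sub (f' s) (f' x)
          linarith)
    have h3 : (|f' x| + δ⁻¹ ^ 2) * (t - x) ≤ (|f' x| + δ⁻¹ ^ 2) * 1 :=
      mul_le_mul_of_nonneg_left (by linarith [hx.1]) (by positivity)
    have := (abs_le.1 step).2
    linarith
  haveI : (nhdsWithin (1:ℝ) (Ioo (0:ℝ) 1)).NeBot := neBot1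
  have hev2 : ∀ᶠ t in nhdsWithin (1:ℝ) (Ioo (0:ℝ) 1), x < t :=
    (eventually_gt_nhds hx.2).filter_mono nhdsWithin_le_nhds
  obtain ⟨t, h1, h2, h3⟩ :=
    ((h.hblow1.eventually (eventually_ge_atTop (f x + (|f' x| + δ⁻¹ ^ 2) + 1))).and
      (hev2.and eventually_mem_nhdsWithin)).exists
  have := hfle t h2.le h3.2
  linarith

lemma SCB.dikinL (h : SCB ν f f' f'' f''') {x : ℝ} (hx : x ∈ Ioo (0:ℝ) 1) :
    1 ≤ Real.sqrt (f'' x) * x := by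
  have := h.reflect.dikinR (mem_refl hx)
  simpa using this

lemma SCB.f'_mono (h : SCB ν f f' f'' f''') {a b : ℝ} (ha : a ∈ Ioo (0:ℝ) 1)
    (hb : b ∈ Ioo (0:ℝ) 1) (hab : a ≤ b) : f' a ≤ f' b :=
  mono_aux hab (fun t ht => h.hd2 t (mem_of_mem_Icc ha hb ht))
    (fun t ht => h.hpos t (mem_of_mem_Icc ha hb (Ioo_subset_Icc_self ht)))

lemma SCB.barrierR (h : SCB ν f f' f'' f''') {a b : ℝ} (ha : a ∈ Ioo (0:ℝ) 1)
    (hb : b ∈ Ioo (0:ℝ) 1) (hab : a ≤ b) (hf : 0 ≤ f' a) : f' a * (b - a) ≤ ν := by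
  rcases hf.lt_or_eq with hf' | hf'
  · have hfpos : ∀ t ∈ Icc a b, 0 < f' t :=
      fun t ht => lt_of_lt_of_le hf' (h.f'_mono ha (mem_of_mem_Icc ha hb ht) ht.1)
    have hder : ∀ t ∈ Icc a b,
        HasDerivAt (fun s => ν * (f' s)⁻¹ + s) (ν * (-f'' t / f' t ^ 2) + 1) t := by
      intro t ht
      have h1 := ((h.hd2 t (mem_of_mem_Icc ha hb ht)).inv (ne_of_gt (hfpos t ht))).const_mul ν
      have h2 := h1.add (hasDerivAt_id t)
      exact h2
    have key := anti_aux hab hder ?_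
    · have hfb : 0 < f' b := hfpos b (right_mem_Icc.2 hab)
      have h1 : 0 < ν * (f' b)⁻¹ := by
        have hν0 : (0:ℝ) < ν := lt_of_lt_of_le one_pos h.hν
        positivity
      have h2 : b - a ≤ ν * (f' a)⁻¹ := by linarith [key]
      calc f' a * (b - a) ≤ f' a * (ν * (f' a)⁻¹) := mul_le_mul_of_nonneg_left h2 hf
        _ = ν := by field_simp
    · intro t ht
      have htm := mem_of_mem_Icc ha hb (Ioo_subset_Icc_self ht)
      have hft : 0 < f' t := hfpos t (Ioo_subset_Icc_self ht)
      have hb' := h.hbar t htm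
      have h2 : (0:ℝ) < f' t ^ 2 := by positivity
      have h3 : ν * (-f'' t / f' t ^ 2) + 1 = 1 - ν * f'' t / f' t ^ 2 := by ring
      rw [h3, sub_nonpos, le_div_iff₀ h2]
      linarith
  · rw [← hf']
    simp only [zero_mul]
    linarith [h.hν]

lemma SCB.growR (h : SCB ν f f' f'' f''') {x y : ℝ} (hx : x ∈ Ioo (0:ℝ) 1)
    (hy : y ∈ Ioo (0:ℝ) 1) (hxy : x ≤ y) :
    f' x + Real.sqrt (f'' x) - Real.sqrt (f'' x) *
      (1 + Real.sqrt (f'' x) * (y - x))⁻¹ ≤ f' y := by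
  have hc : (0:ℝ) < Real.sqrt (f'' x) := Real.sqrt_pos.2 (h.f''_pos x hx)
  set c := Real.sqrt (f'' x) with hcdef
  have hder : ∀ t ∈ Icc x y, HasDerivAt (fun s => f' s + c * (1 + c * (s - x))⁻¹)
      (f'' t + c * (-(c * 1) / (1 + c * (t - x)) ^ 2)) t := by
    intro t ht
    have hA : (0:ℝ) < 1 + c * (t - x) := by nlinarith [ht.1]
    have hlin : HasDerivAt (fun s : ℝ => 1 + c * (s - x)) (c * 1) t :=
      (((hasDerivAt_id t).sub_const x).const_mul c).const_add 1
    exact (h.hd2 t (mem_of_mem_Icc hx hy ht)).add ((hlin.inv (ne_of_gt hA)).const_mul c)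
  have key := mono_aux hxy hder ?_
  · simp only [sub_self, mul_zero, add_zero, inv_one, mul_one] at key
    have heq : c * (1 + c * (y - x))⁻¹ = c * (1 + c * (y - x))⁻¹ := rfl
    linarith [key]
  · intro t ht
    have htm := mem_of_mem_Icc hx hy (Ioo_subset_Icc_self ht)
    have hA : (0:ℝ) < 1 + c * (t - x) := by nlinarith [ht.1]
    have hst : (0:ℝ) < Real.sqrt (f'' t) := Real.sqrt_pos.2 (h.f''_pos t htm)
    have hlip := h.lip hx htm ht.1.le
    have h1 : (Real.sqrt (f'' t))⁻¹ ≤ c⁻¹ + (t - x) := by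
      have := (abs_le.1 hlip).2
      linarith
    have h2 : c ≤ Real.sqrt (f'' t) * (1 + c * (t - x)) := by
      have h3 : c⁻¹ + (t - x) = (1 + c * (t - x)) / c := by field_simp
      rw [h3] at h1
      have h4 : ((1 + c * (t - x)) / c)⁻¹ ≤ Real.sqrt (f'' t) := by
        rw [← inv_inv (Real.sqrt (f'' t))]
        exact inv_anti₀ (by positivity) h1
      rw [inv_div] at h4
      rw [div_le_iff₀ hA] at h4
      linarith [h4]
    have hft : f'' t = Real.sqrt (f'' t) ^ 2 := (Real.sq_sqrt (h.hpos t htm)).symm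
    have h5 : c ^ 2 / (1 + c * (t - x)) ^ 2 ≤ f'' t := by
      rw [div_le_iff₀ (by positivity), hft]
      nlinarith [h2, hst, hA]
    have h6 : c * (-(c * 1) / (1 + c * (t - x)) ^ 2) = -(c ^ 2 / (1 + c * (t - x)) ^ 2) := by
      field_simp
    rw [h6]
    linarith

lemma SCB.growL (h : SCB ν f f' f'' f''') {w x : ℝ} (hw : w ∈ Ioo (0:ℝ) 1)
    (hx : x ∈ Ioo (0:ℝ) 1) (hwx : w ≤ x) :
    f' w ≤ f' x - Real.sqrt (f'' x) + Real.sqrt (f'' x) *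
      (1 + Real.sqrt (f'' x) * (x - w))⁻¹ := by
  have := h.reflect.growR (mem_refl hx) (mem_refl hw) (by linarith)
  simp only [sub_sub_cancel] at this
  have he : (1 - w) - (1 - x) = x - w := by ring
  rw [he] at this
  linarith

lemma SCB.ballR (h : SCB ν f f' f'' f''') {x y : ℝ} (hx : x ∈ Ioo (0:ℝ) 1)
    (hy : y ∈ Ioo (0:ℝ) 1) (hxy : x ≤ y) (hf : 0 ≤ f' x) :
    Real.sqrt (f'' x) * (y - x) ≤ 3 * ν := by
  have hν0 : (0:ℝ) < ν := lt_of_lt_of_le one_pos h.hν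
  have hc : (0:ℝ) < Real.sqrt (f'' x) := Real.sqrt_pos.2 (h.f''_pos x hx)
  set c := Real.sqrt (f'' x) with hcdef
  set q := Real.sqrt ν with hqdef
  have hq1 : 1 ≤ q := Real.one_le_sqrt.2 h.hν
  have hq2 : q ^ 2 = ν := Real.sq_sqrt hν0.le
  by_cases hcase : c * (y - x) ≤ q
  · nlinarith
  push_neg at hcase
  set s := q / c with hsdef
  set w := x + s with hwdef
  have hs0 : 0 < s := by rw [hsdef]; positivity
  have hwy : w < y := by
    have : s < y - x := by
      rw [hsdef, div_lt_iff₀ hc]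
      nlinarith
    rw [hwdef]; linarith
  have hw : w ∈ Ioo (0:ℝ) 1 := ⟨by rw [hwdef]; linarith [hx.1], lt_trans hwy hy.2⟩
  have hg := h.growR hx hw (by rw [hwdef]; linarith)
  have hcs : c * (w - x) = q := by
    rw [hwdef, hsdef]
    field_simp
    ring
  rw [hcs] at hg
  have hq0 : (0:ℝ) < 1 + q := by linarith
  have hrw : c - c * (1 + q)⁻¹ = c * q / (1 + q) := by field_simp; ring
  have hfw : c * q / (1 + q) ≤ f' w := by linarith [hg, hrw]
  have hfw0 : 0 ≤ f' w := le_trans (by positivity) hfw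
  have hb := h.barrierR hw hy hwy.le hfw0
  have hyw : 0 ≤ y - w := by linarith
  have key : c * q / (1 + q) * (y - w) ≤ ν :=
    le_trans (mul_le_mul_of_nonneg_right hfw hyw) hb
  have hcyw : c * (y - w) = c * (y - x) - q := by
    rw [hwdef, hsdef]
    field_simp
    ring
  have key2 : q * (c * (y - x) - q) ≤ ν * (1 + q) := by
    rw [div_mul_eq_mul_div, div_le_iff₀ hq0] at key
    nlinarith [key, hcyw]
  nlinarith [key2, hq1, hq2, hc]

lemma SCB.ballL (h : SCB ν f f' f'' f''') {x y : ℝ} (hx : x ∈ Ioo (0:ℝ) 1)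
    (hy : y ∈ Ioo (0:ℝ) 1) (hyx : y ≤ x) (hf : f' x ≤ 0) :
    Real.sqrt (f'' x) * (x - y) ≤ 3 * ν := by
  have := h.reflect.ballR (mem_refl hx) (mem_refl hy) (by linarith)
    (by simp only [sub_sub_cancel]; linarith)
  simp only [sub_sub_cancel] at this
  have he : (1 - y) - (1 - x) = x - y := by ring
  rw [he] at this
  exact this


set_option maxHeartbeats 1000000 in
lemma SCB.key (h : SCB ν f f' f'' f''') {x z : ℝ} (hx : x ∈ Ioo (0:ℝ) 1)
    (hz : z ∈ Ioo (0:ℝ) 1) (hf : 0 ≤ f' x) :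
    f' x * (z - x) + (1/8) * Real.sqrt (f'' x) * |z - x| + 1/16 ≤ 4 * ν ^ 2 := by
  have hν1 : (1:ℝ) ≤ ν := h.hν
  have hc : (0:ℝ) < Real.sqrt (f'' x) := Real.sqrt_pos.2 (h.f''_pos x hx)
  set c := Real.sqrt (f'' x) with hcdef
  rcases le_or_gt x z with hxz | hzx
  · rw [abs_of_nonneg (sub_nonneg.2 hxz)]
    have hball := h.ballR hx hz hxz hf
    have hfb : f' x ≤ Real.sqrt ν * c := by
      calc f' x = Real.sqrt (f' x ^ 2) := (Real.sqrt_sq hf).symm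
        _ ≤ Real.sqrt (ν * f'' x) := Real.sqrt_le_sqrt (h.hbar x hx)
        _ = Real.sqrt ν * c := by rw [hcdef, Real.sqrt_mul (by linarith)]
    have hsν : Real.sqrt ν ≤ ν := by
      calc Real.sqrt ν ≤ Real.sqrt (ν ^ 2) := Real.sqrt_le_sqrt (by nlinarith)
        _ = ν := Real.sqrt_sq (by linarith)
    have h4 : f' x * (z - x) ≤ Real.sqrt ν * (c * (z - x)) := by
      rw [← mul_assoc]
      exact mul_le_mul_of_nonneg_right hfb (sub_nonneg.2 hxz)
    have h5 : Real.sqrt ν * (c * (z - x)) ≤ Real.sqrt ν * (3 * ν) :=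
      mul_le_mul_of_nonneg_left hball (Real.sqrt_nonneg ν)
    have h6 : Real.sqrt ν * (3 * ν) ≤ ν * (3 * ν) :=
      mul_le_mul_of_nonneg_right hsν (by linarith)
    nlinarith [hball, sq_nonneg (ν - 1)]
  · rw [abs_of_neg (by linarith : z - x < 0)]
    rcases le_or_gt c (8 * f' x) with hcs | hcs
    · have h1 : c * (x - z) ≤ 8 * f' x * (x - z) :=
        mul_le_mul_of_nonneg_right hcs (by linarith)
      nlinarith [sq_nonneg (ν - 1)]
    · -- f' x < c / 8
      set s := (7 * c)⁻¹ with hsdef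
      have hs0 : 0 < s := by rw [hsdef]; positivity
      have hcs7 : c * s = 1/7 := by rw [hsdef]; field_simp
      have hdl := h.dikinL hx
      have hsx : s < x := by
        rw [hsdef, inv_lt_iff_one_lt_mul₀ (by positivity)]
        nlinarith [hdl]
      set w := x - s with hwdef
      have hw : w ∈ Ioo (0:ℝ) 1 := ⟨by rw [hwdef]; linarith, by rw [hwdef]; linarith [hx.2]⟩
      have hxw : x - w = s := by rw [hwdef]; ring
      have hgl := h.growL hw hx (by rw [hwdef]; linarith)
      rw [hxw, hcs7] at hgl
      have hfw : f' w ≤ 0 := by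
        have h7 : c * (1 + (1:ℝ)/7)⁻¹ = (7/8) * c := by
          rw [show ((1:ℝ) + 1/7)⁻¹ = 7/8 by norm_num]; ring
        rw [h7] at hgl
        linarith
      -- ball at w towards 0
      set d := Real.sqrt (f'' w) with hddef
      have hd : (0:ℝ) < d := Real.sqrt_pos.2 (h.f''_pos w hw)
      have hdw := h.dikinL hw
      set y0 := (2 * d)⁻¹ with hy0def
      have hy00 : 0 < y0 := by rw [hy0def]; positivity
      have hy0w : y0 ≤ w / 2 := by
        rw [hy0def]
        rw [inv_le_iff_one_le_mul₀ (by positivity)]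
        nlinarith [hdw]
      have hy0mem : y0 ∈ Ioo (0:ℝ) 1 := ⟨hy00, by nlinarith [hw.2, hw.1]⟩
      have hb2 := h.ballL hw hy0mem (by linarith [hw.1]) hfw
      have hdy0 : d * y0 = 1/2 := by rw [hy0def]; field_simp
      have hdww : d * w ≤ 3 * ν + 1/2 := by nlinarith [hb2, hdy0]
      -- Hessian comparison between w and x
      have hlip := h.lip hw hx (by rw [hwdef]; linarith)
      have h1 : c⁻¹ - d⁻¹ ≥ -(x - w) := by
        have := (abs_le.1 hlip).1
        rw [← hcdef, ← hddef] at this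
        linarith
      have h2 : d⁻¹ ≤ c⁻¹ + s := by rw [← hxw]; linarith
      have h3 : c⁻¹ + s = 8 / (7 * c) := by rw [hsdef]; field_simp; ring
      have hd_ge : (7/8) * c ≤ d := by
        rw [h3] at h2
        have h4 : (8 / (7 * c))⁻¹ ≤ d := by
          rw [← inv_inv d]
          exact inv_anti₀ (by positivity) h2
        rw [inv_div] at h4
        linarith [h4]
      have hcw : c * w ≤ (8/7) * (3 * ν + 1/2) := by
        have h5 : (7/8) * c * w ≤ d * w := mul_le_mul_of_nonneg_right hd_ge hw.1.le
        linarith [hdww]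
      have hcx : c * x ≤ (8/7) * (3 * ν + 1/2) + 1/7 := by
        have : c * x = c * w + c * s := by rw [hwdef]; ring
        rw [this, hcs7]
        linarith
      have hterm1 : f' x * (z - x) ≤ 0 :=
        mul_nonpos_of_nonneg_of_nonpos hf (by linarith)
      have hcd : c * (x - z) ≤ c * x := by
        have hzz : 0 ≤ c * z := mul_nonneg hc.le hz.1.le
        have hexp : c * (x - z) = c * x - c * z := by ring
        rw [hexp]; linarith
      linarith [sq_nonneg (ν - 1)]

end BarrierAux

open BarrierAux in
/-- Let `φ` be a `ν`-self-concordant barrier for the interval `(0, 1)` with `ν ≥ 1`.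
Then for all `x, z ∈ (0, 1)`,
`φ'(x)(z − x) + (1/16)√(φ''(x))|z − x| ≤ 4ν² − (1/16)·max(z/x, (1−z)/(1−x))`. -/
theorem barrier_directional_bound (ν : ℝ) (f f' f'' f''' : ℝ → ℝ)
    (hν : 1 ≤ ν)
    (hd1 : ∀ x ∈ Ioo (0 : ℝ) 1, HasDerivAt f (f' x) x)
    (hd2 : ∀ x ∈ Ioo (0 : ℝ) 1, HasDerivAt f' (f'' x) x)
    (hd3 : ∀ x ∈ Ioo (0 : ℝ) 1, HasDerivAt f'' (f''' x) x)
    (hpos : ∀ x ∈ Ioo (0 : ℝ) 1, 0 ≤ f'' x)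
    (hsc : ∀ x ∈ Ioo (0 : ℝ) 1, |f''' x| ≤ 2 * Real.sqrt (f'' x) ^ 3)
    (hbar : ∀ x ∈ Ioo (0 : ℝ) 1, (f' x) ^ 2 ≤ ν * f'' x)
    (hblow0 : Tendsto f (nhdsWithin 0 (Ioo (0 : ℝ) 1)) atTop)
    (hblow1 : Tendsto f (nhdsWithin 1 (Ioo (0 : ℝ) 1)) atTop) :
    ∀ x ∈ Ioo (0 : ℝ) 1, ∀ z ∈ Ioo (0 : ℝ) 1,
      f' x * (z - x) + (1 / 16) * Real.sqrt (f'' x) * |z - x| ≤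
        4 * ν ^ 2 - (1 / 16) * max (z / x) ((1 - z) / (1 - x)) := by
  intro x hx z hz
  have h : SCB ν f f' f'' f''' := ⟨hν, hd1, hd2, hd3, hpos, hsc, hbar, hblow0, hblow1⟩
  have hc : (0:ℝ) < Real.sqrt (f'' x) := Real.sqrt_pos.2 (h.f''_pos x hx)
  have hdL := h.dikinL hx
  have hdR := h.dikinR hx
  have hM : max (z / x) ((1 - z) / (1 - x)) ≤ 1 + Real.sqrt (f'' x) * |z - x| := by
    apply max_le
    · rw [div_le_iff₀ hx.1]
      have h1 : |z - x| * 1 ≤ |z - x| * (Real.sqrt (f'' x) * x) :=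
        mul_le_mul_of_nonneg_left hdL (abs_nonneg _)
      have h2 : z - x ≤ |z - x| := le_abs_self _
      nlinarith [hx.1]
    · rw [div_le_iff₀ (by linarith [hx.2] : (0:ℝ) < 1 - x)]
      have h1 : |z - x| * 1 ≤ |z - x| * (Real.sqrt (f'' x) * (1 - x)) :=
        mul_le_mul_of_nonneg_left hdR (abs_nonneg _)
      have h2 : -(z - x) ≤ |z - x| := neg_le_abs _
      nlinarith [hx.2]
  rcases le_or_gt 0 (f' x) with hf | hf
  · have hk := h.key hx hz hf
    linarith [hM, hk]
  · have hk := h.reflect.key (mem_refl hx) (mem_refl hz)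
      (by simp only [sub_sub_cancel]; linarith)
    simp only [sub_sub_cancel] at hk
    have he1 : (1 - z) - (1 - x) = -(z - x) := by ring
    rw [he1, abs_neg] at hk
    have he2 : -f' x * -(z - x) = f' x * (z - x) := by ring
    rw [he2] at hk
    linarith [hM, hk]
end
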